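/- arXiv:2511.03440 — 8 statements merged into one kernel-verified Lean document; each statement's English description precedes it below -/
import Mathlib

section
/- Let f : ℝ^n → ℝ be a convex polynomial function and let P = {x ∈ ℝ^n : A x ≤ b} (componentwise inequality, A an m×n real matrix, b ∈ ℝ^m) be a nonempty polyhedron. If f is bounded from below on P, then f attains its minimum on P, i.e., there exists x* ∈ P with f(x*) ≤ f(x) for all x ∈ P. -/
/-!
We minimize over `P ∩ A` for an affine subspace `A`, by induction on `dim A`. If the sublevel set
`{x ∈ P ∩ A | f x ≤ f x₁}` is bounded, it is compact and `f` attains its minimum on it. Otherwise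
this closed convex set contains a ray `x₁ + t • d`, `t ≥ 0`. Then `d` is a recession direction of
`P`, and a convex function bounded above on one ray is bounded above on every parallel ray; so on
each line through a point of `P ∩ A` in direction `d`, `f` is a polynomial bounded on a half-line,
hence constant. Sliding along `d` therefore reduces the problem to finitely many hyperplane sections
of `P ∩ A` transversal to `d`, all of smaller dimension: the facets `ℓ i = b i` with `ℓ i d < 0` if
there are any, and otherwise `P ∩ A` is invariant under `d` and any hyperplane `φ = 0` with
`φ d ≠ 0` will do.
-/

open Set Filter Bornology Module

theorem Polynomial.degree_le_zero_of_isBounded_image_Ici {q : Polynomial ℝ}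
    (h : IsBounded (q.eval '' Ici 0)) : q.degree ≤ 0 := by
  obtain ⟨C, hC⟩ := isBounded_iff_forall_norm_le.1 h
  refine (Polynomial.isBoundedUnder_abs_atTop_iff q).1 ⟨C, eventually_map.2 ?_⟩
  filter_upwards [eventually_ge_atTop 0] with t ht using hC _ (mem_image_of_mem _ ht)

def IsPolynomialOnLines {E : Type*} [AddCommGroup E] [Module ℝ E] (f : E → ℝ) : Prop :=
  ∀ x d : E, ∃ q : Polynomial ℝ, ∀ t : ℝ, f (x + t • d) = q.eval t

section Lines

variable {E : Type*} [AddCommGroup E] [Module ℝ E] {f : E → ℝ}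

theorem ConvexOn.bddAbove_ray_of_bddAbove_ray (hf : ConvexOn ℝ univ f) {x₀ d : E}
    (h : BddAbove ((fun t : ℝ => f (x₀ + t • d)) '' Ici 0)) (x : E) :
    BddAbove ((fun t : ℝ => f (x + t • d)) '' Ici 0) := by
  obtain ⟨M, hM⟩ := h
  refine ⟨(M + f (2 • x - x₀)) / 2, ?_⟩
  rintro _ ⟨t, ht, rfl⟩
  have hM' : f (x₀ + (2 * t) • d) ≤ M :=
    hM (mem_image_of_mem _ (mul_nonneg zero_le_two (mem_Ici.1 ht)))
  have hmid : x + t • d = (1 / 2 : ℝ) • (x₀ + (2 * t) • d) + (1 / 2 : ℝ) • (2 • x - x₀) := by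
    module
  have := hf.2 (mem_univ (x₀ + (2 * t) • d)) (mem_univ (2 • x - x₀))
    (by norm_num : (0 : ℝ) ≤ 1 / 2) (by norm_num : (0 : ℝ) ≤ 1 / 2) (by norm_num)
  simp only [smul_eq_mul] at this
  simp only [hmid]
  linarith

theorem IsPolynomialOnLines.apply_add_smul_eq (hf : IsPolynomialOnLines f) {x d : E}
    (habove : BddAbove ((fun t : ℝ => f (x + t • d)) '' Ici 0))
    (hbelow : BddBelow ((fun t : ℝ => f (x + t • d)) '' Ici 0)) (t : ℝ) :
    f (x + t • d) = f x := by
  obtain ⟨q, hq⟩ := hf x d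
  have hfq : (fun t : ℝ => f (x + t • d)) = q.eval := funext hq
  rw [hfq] at habove hbelow
  have hdeg := Polynomial.degree_le_zero_of_isBounded_image_Ici
    (isBounded_iff_bddBelow_bddAbove.2 ⟨hbelow, habove⟩)
  have hx : f x = q.eval 0 := by simpa using hq 0
  rw [hq, hx, Polynomial.eq_C_of_degree_le_zero hdeg]
  simp

end Lines

theorem IsClosed.exists_ne_zero_add_smul_mem_of_not_isBounded {E : Type*}
    [NormedAddCommGroup E] [NormedSpace ℝ E] [ProperSpace E] {S : Set E} (hS : IsClosed S)
    (hconv : Convex ℝ S) {x : E} (hx : x ∈ S) (hunb : ¬IsBounded S) :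
    ∃ d ≠ 0, ∀ t : ℝ, 0 ≤ t → x + t • d ∈ S := by
  have hfar : ∀ k : ℕ, ∃ y ∈ S, (k : ℝ) < ‖y - x‖ := by
    intro k
    by_contra! h
    exact hunb ((Metric.isBounded_closedBall (x := x) (r := k)).subset fun y hy => by
      simpa [dist_eq_norm] using h y hy)
  choose y hyS hyk using hfar
  set r : ℕ → ℝ := fun k => ‖y k - x‖
  have hr : ∀ k, 0 < r k := fun k => (Nat.cast_nonneg k).trans_lt (hyk k)
  have hsphere : ∀ k, (r k)⁻¹ • (y k - x) ∈ Metric.sphere (0 : E) 1 := fun k => by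
    simp [r, norm_smul, (hr k).ne']
  obtain ⟨d, hd, φ, hφ, hlim⟩ := (isCompact_sphere (0 : E) 1).tendsto_subseq hsphere
  refine ⟨d, ne_zero_of_mem_unit_sphere ⟨d, hd⟩, fun t ht =>
    hS.mem_of_tendsto (tendsto_const_nhds.add (hlim.const_smul t)) ?_⟩
  filter_upwards [eventually_ge_atTop ⌈t⌉₊] with j hj
  have htr : t ≤ r (φ j) := calc
    t ≤ ⌈t⌉₊ := Nat.le_ceil t
    _ ≤ φ j := by exact_mod_cast hj.trans (hφ.id_le j)
    _ ≤ r (φ j) := (hyk _).le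
  convert hconv.add_smul_sub_mem hx (hyS (φ j))
    ⟨div_nonneg ht (hr _).le, div_le_one_of_le₀ htr (hr _).le⟩ using 2
  simp only [Function.comp, smul_smul, div_eq_mul_inv]

theorem Continuous.exists_isMinOn_of_isBounded_sublevel {α β : Type*} [PseudoMetricSpace α]
    [ProperSpace α] [LinearOrder β] [TopologicalSpace β] [OrderClosedTopology β] {f : α → β}
    (hf : Continuous f) {S : Set α} (hS : IsClosed S) {x₁ : α} (hx₁ : x₁ ∈ S)
    (hsub : IsBounded (S ∩ {x | f x ≤ f x₁})) : ∃ z ∈ S, IsMinOn f S z := by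
  have hK := Metric.isCompact_of_isClosed_isBounded
    (hS.inter (isClosed_le hf continuous_const)) hsub
  refine hf.continuousOn.exists_isMinOn' hS hx₁ ?_
  filter_upwards [mem_inf_of_left hK.compl_mem_cocompact,
    mem_inf_of_right (mem_principal_self S)] with x hxK hxS
  exact le_of_not_ge fun h => hxK ⟨hxS, h⟩

theorem exists_isMinOn_of_forall_exists_le {α β ι : Type*} [LinearOrder β] [Finite ι]
    {f : α → β} {s : Set α} (hne : s.Nonempty) (t : ι → Set α) (hts : ∀ j, t j ⊆ s)
    (hmin : ∀ j, (t j).Nonempty → ∃ z ∈ t j, IsMinOn f (t j) z)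
    (hcover : ∀ x ∈ s, ∃ j, ∃ y ∈ t j, f y ≤ f x) :
    ∃ z ∈ s, IsMinOn f s z := by
  obtain ⟨x, hx⟩ := hne
  have : Nonempty α := ⟨x⟩
  choose! z hz hzmin using hmin
  obtain ⟨j₀, y₀, hy₀, -⟩ := hcover x hx
  obtain ⟨j, hj, hjmin⟩ :=
    Set.exists_min_image {j | (t j).Nonempty} (f ∘ z) (toFinite _) ⟨j₀, y₀, hy₀⟩
  refine ⟨z j, hts j (hz j hj), fun x hx => ?_⟩
  obtain ⟨k, y, hy, hyx⟩ := hcover x hx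
  calc f (z j) ≤ f (z k) := hjmin k ⟨y, hy⟩
    _ ≤ f y := hzmin k ⟨y, hy⟩ hy
    _ ≤ f x := hyx

theorem AffineSubspace.add_smul_mem {E : Type*} [AddCommGroup E] [Module ℝ E]
    {A : AffineSubspace ℝ E} {x d : E} (hx : x ∈ A) (hd : d ∈ A.direction) (s : ℝ) :
    x + s • d ∈ A := by
  simpa [add_comm] using A.vadd_mem_of_mem_direction (A.direction.smul_mem s hd) hx

theorem AffineSubspace.coe_inter_setOf_eq_mk' {E : Type*} [AddCommGroup E] [Module ℝ E]
    {A : AffineSubspace ℝ E} {φ : E →ₗ[ℝ] ℝ} {x : E} (hx : x ∈ A) :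
    (A : Set E) ∩ {y | φ y = φ x} = AffineSubspace.mk' x (A.direction ⊓ LinearMap.ker φ) := by
  ext y
  simp [AffineSubspace.mem_mk', ← AffineSubspace.vsub_right_mem_direction_iff_mem hx y,
    sub_eq_zero]

def polyhedron {E ι : Type*} [AddCommGroup E] [Module ℝ E] (ℓ : ι → E →ₗ[ℝ] ℝ) (b : ι → ℝ) :
    Set E :=
  {x | ∀ i, ℓ i x ≤ b i}

section Polyhedron

variable {E ι : Type*} [AddCommGroup E] [Module ℝ E] {ℓ : ι → E →ₗ[ℝ] ℝ} {b : ι → ℝ}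
  {x d : E}

theorem convex_polyhedron : Convex ℝ (polyhedron ℓ b) := by
  rw [polyhedron, ofPred_forall]
  exact convex_iInter fun i => convex_halfSpace_le (ℓ i).isLinear (b i)

theorem isClosed_polyhedron [TopologicalSpace E] [IsTopologicalAddGroup E] [ContinuousSMul ℝ E]
    [T2Space E] [FiniteDimensional ℝ E] : IsClosed (polyhedron ℓ b) := by
  rw [polyhedron, ofPred_forall]
  exact isClosed_iInter fun i => isClosed_le (ℓ i).continuous_of_finiteDimensional continuous_const

theorem add_smul_mem_polyhedron (hx : x ∈ polyhedron ℓ b) {s : ℝ} (h : ∀ i, s * ℓ i d ≤ 0) :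
    x + s • d ∈ polyhedron ℓ b := fun i => by
  simpa using add_le_of_le_of_nonpos (hx i) (h i)

theorem nonpos_of_forall_add_smul_mem_polyhedron
    (h : ∀ t : ℝ, 0 ≤ t → x + t • d ∈ polyhedron ℓ b) (i : ι) : ℓ i d ≤ 0 := by
  by_contra! hpos
  have := h ((|b i - ℓ i x| + 1) / ℓ i d) (by positivity) i
  rw [map_add, map_smul, smul_eq_mul, div_mul_cancel₀ _ hpos.ne'] at this
  linarith [le_abs_self (b i - ℓ i x)]

theorem exists_add_smul_mem_polyhedron_eq [Finite ι] (hx : x ∈ polyhedron ℓ b)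
    (hrec : ∀ i, ℓ i d ≤ 0) (hI : ∃ i, ℓ i d < 0) :
    ∃ i, ℓ i d < 0 ∧ ∃ s : ℝ, x + s • d ∈ polyhedron ℓ b ∧ ℓ i (x + s • d) = b i := by
  obtain ⟨i, hi, himax⟩ := Set.exists_max_image {i | ℓ i d < 0}
    (fun i => (b i - ℓ i x) / ℓ i d) (toFinite _) hI
  refine ⟨i, hi, (b i - ℓ i x) / ℓ i d, fun k => ?_, ?_⟩
  · rw [map_add, map_smul, smul_eq_mul]
    rcases (hrec k).lt_or_eq with hk | hk
    · linarith [(div_le_iff_of_neg hk).1 (himax k hk)]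
    · simpa [hk] using hx k
  · rw [map_add, map_smul, smul_eq_mul, div_mul_cancel₀ _ (ne_of_lt hi)]
    ring

end Polyhedron

section Minimization

variable {E ι : Type*} [NormedAddCommGroup E] [NormedSpace ℝ E] [Finite ι] {f : E → ℝ}

theorem exists_isMinOn_polyhedron_inter_of_sections {ℓ : ι → E →ₗ[ℝ] ℝ} {b : ι → ℝ}
    {A : AffineSubspace ℝ E} {d : E} (hd : d ≠ 0) (hdA : d ∈ A.direction)
    (hrec : ∀ i, ℓ i d ≤ 0) (hconst : ∀ x ∈ polyhedron ℓ b ∩ A, ∀ s : ℝ, f (x + s • d) = f x)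
    (hne : (polyhedron ℓ b ∩ A).Nonempty)
    (hsections : ∀ φ : E →ₗ[ℝ] ℝ, φ d ≠ 0 → ∀ β, (polyhedron ℓ b ∩ A ∩ {x | φ x = β}).Nonempty →
      ∃ z ∈ polyhedron ℓ b ∩ A ∩ {x | φ x = β}, IsMinOn f (polyhedron ℓ b ∩ A ∩ {x | φ x = β}) z) :
    ∃ z ∈ polyhedron ℓ b ∩ A, IsMinOn f (polyhedron ℓ b ∩ A) z := by
  by_cases hI : ∃ i, ℓ i d < 0
  · refine exists_isMinOn_of_forall_exists_le hne
      (fun i : {i // ℓ i d < 0} => polyhedron ℓ b ∩ A ∩ {x | ℓ i x = b i})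
      (fun _ => inter_subset_left) (fun i => hsections (ℓ i) i.2.ne _) fun x hx => ?_
    obtain ⟨i, hi, s, hsP, hsb⟩ := exists_add_smul_mem_polyhedron_eq hx.1 hrec hI
    exact ⟨⟨i, hi⟩, x + s • d, ⟨⟨hsP, A.add_smul_mem hx.2 hdA s⟩, hsb⟩, (hconst x hx s).le⟩
  · push Not at hI
    obtain ⟨φ, hφ⟩ := SeparatingDual.exists_ne_zero (R := ℝ) hd
    refine exists_isMinOn_of_forall_exists_le hne
      (fun _ : Unit => polyhedron ℓ b ∩ A ∩ {x | φ x = 0}) (fun _ => inter_subset_left)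
      (fun _ => hsections φ hφ 0) fun x hx => ?_
    set s := -(φ x / φ d)
    have hsP : x + s • d ∈ polyhedron ℓ b := add_smul_mem_polyhedron hx.1 fun i => by
      simp [le_antisymm (hrec i) (hI i)]
    refine ⟨(), x + s • d, ⟨⟨hsP, A.add_smul_mem hx.2 hdA s⟩, ?_⟩, (hconst x hx s).le⟩
    simp [s, hφ]

theorem ConvexOn.exists_isMinOn_polyhedron_inter [FiniteDimensional ℝ E] (hconv : ConvexOn ℝ univ f)
    (hpoly : IsPolynomialOnLines f) (ℓ : ι → E →ₗ[ℝ] ℝ) (b : ι → ℝ) (A : AffineSubspace ℝ E)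
    (hne : (polyhedron ℓ b ∩ A).Nonempty) (hbdd : BddBelow (f '' (polyhedron ℓ b ∩ A))) :
    ∃ z ∈ polyhedron ℓ b ∩ A, IsMinOn f (polyhedron ℓ b ∩ A) z := by
  induction hn : finrank ℝ A.direction using Nat.strong_induction_on generalizing A with
  | _ n ih =>
  set S := polyhedron ℓ b ∩ A
  have hcont : Continuous f := continuousOn_univ.1 (hconv.continuousOn isOpen_univ)
  have hSclosed : IsClosed S := isClosed_polyhedron.inter A.closed_of_finiteDimensional
  obtain ⟨x₁, hx₁⟩ := hne
  by_cases hsub : IsBounded (S ∩ {x | f x ≤ f x₁})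
  · exact hcont.exists_isMinOn_of_isBounded_sublevel hSclosed hx₁ hsub
  obtain ⟨d, hd, hray⟩ := (hSclosed.inter (isClosed_le hcont continuous_const))
    |>.exists_ne_zero_add_smul_mem_of_not_isBounded
      ((convex_polyhedron.inter A.convex).inter (by simpa using hconv.convex_le (f x₁)))
      ⟨hx₁, le_refl (f x₁)⟩ hsub
  have hdA : d ∈ A.direction := by
    simpa using A.vsub_mem_direction (hray 1 zero_le_one).1.2 hx₁.2
  have hrec : ∀ i, ℓ i d ≤ 0 :=
    nonpos_of_forall_add_smul_mem_polyhedron fun t ht => (hray t ht).1.1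
  have hconst : ∀ x ∈ S, ∀ s : ℝ, f (x + s • d) = f x := by
    intro x hx
    refine hpoly.apply_add_smul_eq
      (hconv.bddAbove_ray_of_bddAbove_ray (x₀ := x₁) ?_ x) (hbdd.mono ?_)
    · exact ⟨f x₁, by rintro _ ⟨t, ht, rfl⟩; exact (hray t ht).2⟩
    · rintro _ ⟨t, ht, rfl⟩
      exact mem_image_of_mem f ⟨add_smul_mem_polyhedron hx.1 fun i =>
        mul_nonpos_of_nonneg_of_nonpos ht (hrec i), A.add_smul_mem hx.2 hdA t⟩
  refine exists_isMinOn_polyhedron_inter_of_sections hd hdA hrec hconst ⟨x₁, hx₁⟩ ?_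
  rintro φ hφ _ ⟨x, hxS, rfl⟩
  have heq : S ∩ {y | φ y = φ x} =
      polyhedron ℓ b ∩ AffineSubspace.mk' x (A.direction ⊓ LinearMap.ker φ) := by
    rw [inter_assoc, A.coe_inter_setOf_eq_mk' hxS.2]
  have hlt : finrank ℝ ↥(A.direction ⊓ LinearMap.ker φ) < n :=
    hn ▸ Submodule.finrank_lt_finrank_of_lt (inf_lt_left.2 fun h => hφ (h hdA))
  rw [heq]
  exact ih _ hlt _ (heq ▸ ⟨x, hxS, rfl⟩) (hbdd.mono (image_mono (heq ▸ inter_subset_left)))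
    (by rw [AffineSubspace.direction_mk'])

end Minimization

theorem isPolynomialOnLines_eval {σ : Type*} (p : MvPolynomial σ ℝ) :
    IsPolynomialOnLines fun x : EuclideanSpace ℝ σ => MvPolynomial.eval (fun i => x i) p := by
  intro x d
  refine ⟨MvPolynomial.aeval (fun i => Polynomial.C (x i) + Polynomial.X * Polynomial.C (d i)) p,
    fun t => ?_⟩
  rw [← Polynomial.coe_aeval_eq_eval, MvPolynomial.comp_aeval_apply]
  simp [mul_comm t]

theorem ConvexOn.exists_isMinOn_polyhedron {E ι : Type*} [NormedAddCommGroup E]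
    [NormedSpace ℝ E] [FiniteDimensional ℝ E] [Finite ι] {f : E → ℝ}
    (hconv : ConvexOn ℝ univ f) (hpoly : IsPolynomialOnLines f) (ℓ : ι → E →ₗ[ℝ] ℝ)
    (b : ι → ℝ) (hne : (polyhedron ℓ b).Nonempty) (hbdd : BddBelow (f '' polyhedron ℓ b)) :
    ∃ z ∈ polyhedron ℓ b, IsMinOn f (polyhedron ℓ b) z := by
  simpa using hconv.exists_isMinOn_polyhedron_inter hpoly ℓ b ⊤ (by simpa using hne)
    (by simpa using hbdd)

/-- A convex polynomial function that is bounded from below on a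
nonempty polyhedron attains its minimum on that polyhedron. -/
theorem convex_poly_attains_min_on_polyhedron {n m : ℕ}
    (f : EuclideanSpace ℝ (Fin n) → ℝ)
    (hpoly : ∃ p : MvPolynomial (Fin n) ℝ, ∀ x, f x = MvPolynomial.eval (fun i => x i) p)
    (hconv : ConvexOn ℝ Set.univ f)
    (A : Matrix (Fin m) (Fin n) ℝ) (b : Fin m → ℝ)
    (P : Set (EuclideanSpace ℝ (Fin n)))
    (hP : P = {x | ∀ i, A.mulVec (fun j => x j) i ≤ b i})
    (hne : P.Nonempty)
    (hbdd : BddBelow (f '' P)) :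
    ∃ xstar ∈ P, ∀ x ∈ P, f xstar ≤ f x := by
  obtain ⟨p, hp⟩ := hpoly
  obtain rfl : f = _ := funext hp
  let ℓ : Fin m → EuclideanSpace ℝ (Fin n) →ₗ[ℝ] ℝ := fun i =>
    LinearMap.proj i ∘ₗ A.mulVecLin ∘ₗ (WithLp.linearEquiv 2 ℝ (Fin n → ℝ)).toLinearMap
  have hPℓ : P = polyhedron ℓ b := hP
  subst hPℓ
  exact hconv.exists_isMinOn_polyhedron (isPolynomialOnLines_eval p) ℓ b hne hbdd
end

section
/- Let f : ℝ^n → ℝ be a convex polynomial function. Then there exist a linear subspace U ⊆ ℝ^n, a vector w ∈ U^⊥ (possibly w = 0), a constant α ∈ ℝ, a vector β ∈ ℝ^n, and μ > 0 such that for all x ∈ ℝ^n: f(x) = f(x_U) − ⟨w, x⟩, and f(x_U) ≥ α + ⟨β, x_U⟩ + (μ/2)·‖x_U‖², where x_U denotes the orthogonal projection of x onto U. -/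
/-!
Let `V` be the lineality space of `f`: the directions `d` such that `f` is affine along every
line `x + ℝ d`. With `g = ∇f 0`, convexity gives `F y := f y - f 0 - ⟪g, y⟫ ≥ 0`, which forces
`f v - f 0 = ⟪g, v⟫` on `V`; splitting `x` along `U = Vᗮ` and `V` yields the affine part `⟪w, x⟫`.

For the growth on `U`: since `F ≥ 0` is convex with `F 0 = 0`, the polynomial `s ↦ F (s • y)`
takes values in `[0, F y]` on `[0, 1]`, so by Lagrange interpolation its coefficients are
`O(F y)`. Its coefficient of `s ^ j` for `j ≥ 2` is the degree-`j` homogeneous component of the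
polynomial at `y`. These components cannot all vanish at a unit vector of `U` (`f` would be
affine along it, so it would lie in `V`), hence by compactness their size on the unit sphere of
`U` is bounded below, and homogeneity turns this into `F y ≥ c ‖y‖ ^ 2` for `‖y‖ ≥ 1`.
-/

open Set RealInnerProductSpace

section Convex

variable {E : Type*} [AddCommGroup E] [Module ℝ E] {f : E → ℝ}

theorem ConvexOn.le_of_bddAbove (hf : ConvexOn ℝ univ f) (hb : BddAbove (range f)) (x y : E) :
    f y ≤ f x := by
  obtain ⟨M, hM⟩ := hb
  have hM' (z : E) : f z ≤ M := hM (mem_range_self z)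
  by_contra! hxy
  set δ := f y - f x
  have hδ : 0 < δ := sub_pos.2 hxy
  have hMx : δ ≤ M - f x := by linarith [hM' y]
  have hMx₀ : 0 < M - f x := hδ.trans_le hMx
  -- `y` lies between `x` and the far point `z`, so `f y - f x ≤ a * (M - f x) = δ / 2`
  set a := δ / (2 * (M - f x))
  have ha : 0 < a := by positivity
  have ha1 : a ≤ 1 / 2 := by
    rw [div_le_iff₀ (by positivity)]; linarith
  have haM : a * (M - f x) = δ / 2 := by
    simp only [a]; field_simp
  set z := x + a⁻¹ • (y - x)
  have hyz : (1 - a) • x + a • z = y := by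
    simp only [z, smul_add, smul_smul, mul_inv_cancel₀ ha.ne', one_smul, sub_smul]; abel
  have hconv := hf.2 (mem_univ x) (mem_univ z) (show 0 ≤ 1 - a by linarith) ha.le (by ring)
  rw [hyz, smul_eq_mul, smul_eq_mul] at hconv
  nlinarith [hM' z]

theorem ConvexOn.comp_add_smul (hf : ConvexOn ℝ univ f) (x d : E) :
    ConvexOn ℝ univ fun t : ℝ => f (x + t • d) := by
  refine ⟨convex_univ, fun s _ t _ a b ha hb hab => ?_⟩
  have hline : x + (a • s + b • t) • d = a • (x + s • d) + b • (x + t • d) := by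
    rw [smul_add, smul_add, smul_smul, smul_smul, add_smul, ← add_assoc]
    nth_rewrite 1 [← one_smul ℝ x, ← hab, add_smul]
    abel
  simp only [hline]
  exact hf.2 (mem_univ _) (mem_univ _) ha hb hab

variable (f) in
def linealitySpace : Submodule ℝ E where
  carrier := {d | ∀ x (t : ℝ), f (x + t • d) = f x + t * (f d - f 0)}
  zero_mem' := by simp
  add_mem' := by
    intro d d' hd hd' x t
    have h1 : f (d + d') = f d + (f d' - f 0) := by simpa using hd' d 1
    rw [smul_add, ← add_assoc, hd' (x + t • d) t, hd x t, h1]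
    ring
  smul_mem' := by
    intro s d hd x t
    have h1 : f (s • d) = f 0 + s * (f d - f 0) := by simpa using hd 0 s
    rw [smul_smul, hd x (t * s), h1]
    ring

theorem map_add_of_mem_linealitySpace {v : E} (hv : v ∈ linealitySpace f) (x : E) :
    f (x + v) = f x + (f v - f 0) := by
  simpa using hv x 1

theorem ConvexOn.mem_linealitySpace (hf : ConvexOn ℝ univ f) {d : E} {c : ℝ}
    (hd : ∀ t : ℝ, f (t • d) = f 0 + t * c) : d ∈ linealitySpace f := by
  obtain rfl : c = f d - f 0 := by
    have h1 := hd 1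
    rw [one_smul] at h1
    linarith
  intro x t
  set φ : ℝ → ℝ := fun t => f (x + t • d) - t * (f d - f 0)
  have hφ : ConvexOn ℝ univ φ :=
    (hf.comp_add_smul x d).sub ((LinearMap.lsmul ℝ ℝ |>.flip (f d - f 0)).concaveOn convex_univ)
  -- `x + t • d` is the midpoint of `2 • x` and `(2 * t) • d`
  have hbdd : BddAbove (range φ) := by
    refine ⟨(f ((2 : ℝ) • x) + f 0) / 2, ?_⟩
    rintro _ ⟨t, rfl⟩
    have h := hf.2 (mem_univ ((2 : ℝ) • x)) (mem_univ ((2 * t) • d))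
      (by norm_num : (0 : ℝ) ≤ 1 / 2) (by norm_num : (0 : ℝ) ≤ 1 / 2) (by norm_num)
    rw [smul_smul, smul_smul, hd] at h
    norm_num [← mul_assoc] at h
    simp only [φ]
    linarith
  have := (hφ.le_of_bddAbove hbdd 0 t).antisymm (hφ.le_of_bddAbove hbdd t 0)
  simp only [φ, zero_smul, add_zero, zero_mul, sub_zero] at this
  linarith

end Convex

section InnerProduct

variable {E : Type*} [NormedAddCommGroup E] [InnerProductSpace ℝ E] {f : E → ℝ}

theorem ConvexOn.add_inner_gradient_le [CompleteSpace E] (hf : ConvexOn ℝ univ f) {x : E}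
    (hx : DifferentiableAt ℝ f x) (y : E) : f x + ⟪gradient f x, y - x⟫ ≤ f y := by
  have hline : HasDerivAt (fun t : ℝ => x + t • (y - x)) (y - x) 0 := by
    simpa using ((hasDerivAt_id (0 : ℝ)).smul_const (y - x)).const_add x
  have hx' : HasFDerivAt f (fderiv ℝ f x) (x + (0 : ℝ) • (y - x)) := by
    simpa using hx.hasFDerivAt
  have hslope := (hf.comp_add_smul x (y - x)).le_slope_of_hasDerivAt (mem_univ 0) (mem_univ 1)
    one_pos (hx'.comp_hasDerivAt 0 hline)
  simp only [slope_def_field, sub_zero, div_one, zero_smul, add_zero, one_smul,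
    add_sub_cancel] at hslope
  rw [inner_gradient_left]
  linarith

variable {g : E}

theorem inner_eq_of_mem_linealitySpace (hg : ∀ y, f 0 + ⟪g, y⟫ ≤ f y) {v : E}
    (hv : v ∈ linealitySpace f) : f v - f 0 = ⟪g, v⟫ := by
  have hline (t : ℝ) : f 0 + t * ⟪g, v⟫ ≤ f 0 + t * (f v - f 0) := by
    have h := hv 0 t
    rw [zero_add] at h
    simpa [h, real_inner_smul_right] using hg (t • v)
  linarith [hline 1, hline (-1)]

theorem eq_apply_starProjection_add_inner (hg : ∀ y, f 0 + ⟪g, y⟫ ≤ f y)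
    {U : Submodule ℝ E} [U.HasOrthogonalProjection] (hU : Uᗮ ≤ linealitySpace f) (x : E) :
    f x = f (U.starProjection x) + ⟪g - U.starProjection g, x⟫ := by
  have hv : x - U.starProjection x ∈ linealitySpace f := hU (U.sub_starProjection_mem_orthogonal x)
  calc f x = f (U.starProjection x + (x - U.starProjection x)) := by rw [add_sub_cancel]
    _ = f (U.starProjection x) + ⟪g, x - U.starProjection x⟫ := by
      rw [map_add_of_mem_linealitySpace hv, inner_eq_of_mem_linealitySpace hg hv]
    _ = f (U.starProjection x) + ⟪g - U.starProjection g, x⟫ := by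
      rw [inner_sub_left, inner_sub_right, U.inner_starProjection_left_eq_right]

theorem ConvexOn.abs_sub_inner_smul_le (hf : ConvexOn ℝ univ f) (hg : ∀ y, f 0 + ⟪g, y⟫ ≤ f y)
    (y : E) {s : ℝ} (hs : s ∈ Icc (0 : ℝ) 1) :
    |f (s • y) - f 0 - ⟪g, s • y⟫| ≤ f y - f 0 - ⟪g, y⟫ := by
  have hconv := hf.2 (mem_univ y) (mem_univ 0) hs.1 (sub_nonneg.2 hs.2) (add_sub_cancel s 1)
  simp only [smul_zero, add_zero, smul_eq_mul] at hconv
  rw [real_inner_smul_right, abs_of_nonneg (by linarith [hg (s • y), real_inner_smul_right g y s])]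
  nlinarith [hg y, hs.2]

end InnerProduct

namespace Polynomial

open Finset

theorem exists_sum_abs_coeff_le (D : ℕ) :
    ∃ κ > 0, ∀ (q : ℝ[X]) (M : ℝ), q.natDegree ≤ D → (∀ s ∈ Icc (0 : ℝ) 1, |q.eval s| ≤ M) →
      ∑ j ∈ range (D + 1), |q.coeff j| ≤ κ * M := by
  classical
  -- Lagrange interpolation at the nodes `i / (D + 1)`, `i ≤ D`, writes every coefficient as a
  -- fixed linear combination of values on `[0, 1]`
  set v : Fin (D + 1) → ℝ := fun i => (i : ℝ) / (D + 1)
  have hv : Set.InjOn v (univ : Finset (Fin (D + 1))) := by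
    intro i _ j _ hij
    have hD : (D + 1 : ℝ) ≠ 0 := by positivity
    simpa [v, div_left_inj' hD, Fin.val_inj] using hij
  have hv01 (i : Fin (D + 1)) : v i ∈ Icc (0 : ℝ) 1 := by
    refine ⟨by positivity, div_le_one_of_le₀ ?_ (by positivity)⟩
    exact_mod_cast i.is_lt.le
  set b := Lagrange.basis (univ : Finset (Fin (D + 1))) v
  refine ⟨∑ j ∈ range (D + 1), ∑ i, |(b i).coeff j| + 1, by positivity, fun q M hq hM => ?_⟩
  have hM0 : 0 ≤ M := (abs_nonneg _).trans (hM 0 ⟨le_rfl, zero_le_one⟩)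
  have hcoeff (j : ℕ) : |q.coeff j| ≤ M * ∑ i, |(b i).coeff j| := by
    have hdeg : q.degree < (univ : Finset (Fin (D + 1))).card := by
      rw [card_univ, Fintype.card_fin]
      exact (degree_le_of_natDegree_le hq).trans_lt (by exact_mod_cast D.lt_succ_self)
    rw [Lagrange.eq_interpolate hv hdeg, Lagrange.interpolate_apply, finsetSum_coeff, mul_sum]
    refine (abs_sum_le_sum_abs _ _).trans (sum_le_sum fun i _ => ?_)
    rw [coeff_C_mul, abs_mul]
    exact mul_le_mul_of_nonneg_right (hM _ (hv01 i)) (abs_nonneg _)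
  calc ∑ j ∈ range (D + 1), |q.coeff j| ≤ ∑ j ∈ range (D + 1), M * ∑ i, |(b i).coeff j| :=
        sum_le_sum fun j _ => hcoeff j
    _ ≤ (∑ j ∈ range (D + 1), ∑ i, |(b i).coeff j| + 1) * M := by
        rw [← mul_sum]; nlinarith

end Polynomial

namespace MvPolynomial

section Homogeneous

variable {σ R : Type*} [CommSemiring R]

theorem IsHomogeneous.eval_smul {φ : MvPolynomial σ R} {m : ℕ} (hφ : φ.IsHomogeneous m)
    (r : R) (x : σ → R) : eval (r • x) φ = r ^ m * eval x φ := by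
  simp only [eval_eq, Finset.mul_sum]
  refine Finset.sum_congr rfl fun d hd => ?_
  have hdeg : ∑ i ∈ d.support, d i = m := by
    rw [← Finsupp.degree_apply, Finsupp.degree_eq_weight_one]
    exact hφ (mem_support_iff.mp hd)
  simp only [Pi.smul_apply, smul_eq_mul, mul_pow, Finset.prod_mul_distrib,
    Finset.prod_pow_eq_pow_sum, hdeg]
  ring

noncomputable def rayPolynomial (p : MvPolynomial σ R) (x : σ → R) : Polynomial R :=
  ∑ j ∈ Finset.range (p.totalDegree + 1),
    Polynomial.C (eval x (homogeneousComponent j p)) * Polynomial.X ^ j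

variable (p : MvPolynomial σ R) (x : σ → R)

theorem eval_rayPolynomial (t : R) : (rayPolynomial p x).eval t = eval (t • x) p := by
  conv_rhs => rw [← sum_homogeneousComponent p]
  simp only [rayPolynomial, Polynomial.eval_finsetSum, Polynomial.eval_C_mul,
    Polynomial.eval_X_pow, map_sum, (homogeneousComponent_isHomogeneous _ p).eval_smul]
  exact Finset.sum_congr rfl fun j _ => mul_comm _ _

theorem coeff_rayPolynomial (j : ℕ) :
    (rayPolynomial p x).coeff j = eval x (homogeneousComponent j p) := by
  simp only [rayPolynomial, Polynomial.finsetSum_coeff, Polynomial.coeff_C_mul_X_pow,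
    Finset.sum_ite_eq, Finset.mem_range]
  split_ifs with hj
  · rfl
  · rw [homogeneousComponent_eq_zero _ _ (by omega), map_zero]

theorem natDegree_rayPolynomial_le : (rayPolynomial p x).natDegree ≤ p.totalDegree :=
  Polynomial.natDegree_le_iff_coeff_eq_zero.2 fun j hj => by
    rw [coeff_rayPolynomial, homogeneousComponent_eq_zero _ _ (by exact_mod_cast hj), map_zero]

end Homogeneous

section NonlinearMagnitude

variable {σ : Type*}

noncomputable def nonlinearMagnitude (p : MvPolynomial σ ℝ) (x : σ → ℝ) : ℝ :=
  ∑ j ∈ Finset.Ico 2 (p.totalDegree + 1), |eval x (homogeneousComponent j p)|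

variable (p : MvPolynomial σ ℝ)

theorem nonlinearMagnitude_nonneg (x : σ → ℝ) : 0 ≤ nonlinearMagnitude p x :=
  Finset.sum_nonneg fun _ _ => abs_nonneg _

theorem continuous_nonlinearMagnitude : Continuous (nonlinearMagnitude p) :=
  continuous_finsetSum _ fun _ _ => (continuous_eval _).abs

theorem sq_mul_nonlinearMagnitude_le {r : ℝ} (hr : 1 ≤ r) (x : σ → ℝ) :
    r ^ 2 * nonlinearMagnitude p x ≤ nonlinearMagnitude p (r • x) := by
  rw [nonlinearMagnitude, nonlinearMagnitude, Finset.mul_sum]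
  refine Finset.sum_le_sum fun j hj => ?_
  have hr0 : 0 ≤ r ^ j := by positivity
  rw [(homogeneousComponent_isHomogeneous j p).eval_smul, abs_mul, abs_of_nonneg hr0]
  exact mul_le_mul_of_nonneg_right (pow_le_pow_right₀ hr (Finset.mem_Ico.1 hj).1) (abs_nonneg _)

theorem eval_smul_of_nonlinearMagnitude_eq_zero {x : σ → ℝ} (h : nonlinearMagnitude p x = 0)
    (t : ℝ) : eval (t • x) p = eval 0 p + t * eval x (homogeneousComponent 1 p) := by
  have hcoeff (j : ℕ) (hj : 2 ≤ j) : (rayPolynomial p x).coeff j = 0 := by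
    rw [coeff_rayPolynomial]
    rcases le_or_gt j p.totalDegree with hjD | hjD
    · exact abs_eq_zero.1 <| (Finset.sum_eq_zero_iff_of_nonneg fun _ _ => abs_nonneg _).1 h j
        (Finset.mem_Ico.2 ⟨hj, Nat.lt_succ_of_le hjD⟩)
    · rw [homogeneousComponent_eq_zero _ _ hjD, map_zero]
  have hdeg : (rayPolynomial p x).natDegree < 2 := Nat.lt_succ_of_le <|
    Polynomial.natDegree_le_iff_coeff_eq_zero.2 fun j hj => hcoeff j (by exact_mod_cast hj)
  have h0 : eval 0 p = (rayPolynomial p x).coeff 0 := by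
    rw [Polynomial.coeff_zero_eq_eval_zero, eval_rayPolynomial, zero_smul]
  rw [← eval_rayPolynomial, Polynomial.eval_eq_sum_range' hdeg, h0, ← coeff_rayPolynomial p x 1]
  simp [Finset.sum_range_succ, mul_comm]

end NonlinearMagnitude

end MvPolynomial

section Euclidean

open MvPolynomial

variable {ι : Type*} [Fintype ι] {f : EuclideanSpace ℝ ι → ℝ} {p : MvPolynomial ι ℝ}

theorem exists_nonlinearMagnitude_le (hp : ∀ x, f x = eval (fun i => x i) p)
    (hf : ConvexOn ℝ univ f) {g : EuclideanSpace ℝ ι} (hg : ∀ y, f 0 + ⟪g, y⟫ ≤ f y) :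
    ∃ κ > 0, ∀ y, nonlinearMagnitude p (fun i => y i) ≤ κ * (f y - f 0 - ⟪g, y⟫) := by
  obtain ⟨κ, hκ, hcoeff⟩ := Polynomial.exists_sum_abs_coeff_le (p.totalDegree + 1)
  refine ⟨κ, hκ, fun y => ?_⟩
  set q := rayPolynomial p (fun i => y i) - Polynomial.C (f 0) - Polynomial.C ⟪g, y⟫ * Polynomial.X
  have hq_eval (s : ℝ) : q.eval s = f (s • y) - f 0 - ⟪g, s • y⟫ := by
    simp only [q, Polynomial.eval_sub, Polynomial.eval_mul, Polynomial.eval_C, Polynomial.eval_X,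
      eval_rayPolynomial, hp (s • y), real_inner_smul_right, mul_comm s]
    rfl
  have hq_deg : q.natDegree ≤ p.totalDegree + 1 := by
    refine (Polynomial.natDegree_sub_le _ _).trans (max_le ((Polynomial.natDegree_sub_le _ _).trans
      (max_le ((natDegree_rayPolynomial_le _ _).trans (Nat.le_succ _)) (by simp))) ?_)
    exact (Polynomial.natDegree_C_mul_le _ _).trans (Polynomial.natDegree_X_le.trans (by omega))
  have hq_coeff (j : ℕ) (hj : 2 ≤ j) :
      q.coeff j = eval (fun i => y i) (homogeneousComponent j p) := by
    have hj0 : j ≠ 0 := by omega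
    have hj1 : 1 ≠ j := by omega
    simp [q, coeff_rayPolynomial, Polynomial.coeff_C, Polynomial.coeff_X, hj0, hj1]
  calc nonlinearMagnitude p (fun i => y i) = ∑ j ∈ Finset.Ico 2 (p.totalDegree + 1), |q.coeff j| :=
        Finset.sum_congr rfl fun j hj => by rw [hq_coeff j (Finset.mem_Ico.1 hj).1]
    _ ≤ ∑ j ∈ Finset.range (p.totalDegree + 1 + 1), |q.coeff j| :=
        Finset.sum_le_sum_of_subset_of_nonneg
          (fun j hj => by
            simp only [Finset.mem_Ico, Finset.mem_range] at hj ⊢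
            omega)
          fun _ _ _ => abs_nonneg _
    _ ≤ κ * (f y - f 0 - ⟪g, y⟫) :=
        hcoeff q _ hq_deg fun s hs => hq_eval s ▸ hf.abs_sub_inner_smul_le hg y hs

theorem nonlinearMagnitude_pos_of_mem_orthogonal (hp : ∀ x, f x = eval (fun i => x i) p)
    (hf : ConvexOn ℝ univ f) {d : EuclideanSpace ℝ ι}
    (hd : d ∈ (linealitySpace f)ᗮ) (hd0 : d ≠ 0) : 0 < nonlinearMagnitude p (fun i => d i) := by
  refine (nonlinearMagnitude_nonneg p _).lt_of_ne fun h => hd0 ?_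
  have hline : d ∈ linealitySpace f := hf.mem_linealitySpace fun t => by
    rw [hp, hp 0]
    exact eval_smul_of_nonlinearMagnitude_eq_zero p h.symm t
  have := Submodule.mem_inf.2 ⟨hline, hd⟩
  rwa [Submodule.inf_orthogonal_eq_bot, Submodule.mem_bot] at this

theorem exists_sq_le_of_mem_orthogonal_linealitySpace (hp : ∀ x, f x = eval (fun i => x i) p)
    (hf : ConvexOn ℝ univ f) {g : EuclideanSpace ℝ ι}
    (hg : ∀ y, f 0 + ⟪g, y⟫ ≤ f y) :
    ∃ c > 0, ∀ y ∈ (linealitySpace f)ᗮ, c * (‖y‖ ^ 2 - 1) ≤ f y - f 0 - ⟪g, y⟫ := by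
  set U := (linealitySpace f)ᗮ
  obtain ⟨κ, hκ, hκle⟩ := exists_nonlinearMagnitude_le hp hf hg
  obtain ⟨m, hm, hmle⟩ := ((isCompact_sphere (0 : EuclideanSpace ℝ ι) 1).inter_right
    U.closed_of_finiteDimensional).exists_forall_le'
    ((continuous_nonlinearMagnitude p).comp (PiLp.continuous_ofLp 2 _)).continuousOn
    fun d hd => nonlinearMagnitude_pos_of_mem_orthogonal hp hf hd.2
      (ne_zero_of_mem_unit_sphere ⟨d, hd.1⟩)
  refine ⟨m / κ, by positivity, fun y hy => ?_⟩
  have hF : 0 ≤ f y - f 0 - ⟪g, y⟫ := by linarith [hg y]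
  rcases le_or_gt ‖y‖ 1 with hy1 | hy1
  · have : ‖y‖ ^ 2 ≤ 1 := pow_le_one₀ (norm_nonneg y) hy1
    nlinarith [div_pos hm hκ]
  set d := ‖y‖⁻¹ • y
  have hyd : y = ‖y‖ • d := by rw [smul_inv_smul₀ (by positivity)]
  have hd : d ∈ Metric.sphere 0 1 ∩ (U : Set _) :=
    ⟨by simp [d, norm_smul, (by positivity : ‖y‖ ≠ 0)], U.smul_mem _ hy⟩
  have key : ‖y‖ ^ 2 * m ≤ κ * (f y - f 0 - ⟪g, y⟫) :=
    calc ‖y‖ ^ 2 * m ≤ ‖y‖ ^ 2 * nonlinearMagnitude p (fun i => d i) :=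
          mul_le_mul_of_nonneg_left (hmle d hd) (by positivity)
      _ ≤ nonlinearMagnitude p (fun i => y i) := by
          conv_rhs => rw [hyd]
          exact sq_mul_nonlinearMagnitude_le p hy1.le _
      _ ≤ κ * (f y - f 0 - ⟪g, y⟫) := hκle y
  rw [div_mul_eq_mul_div, div_le_iff₀ hκ]
  nlinarith

end Euclidean

/-- Structure theorem for convex polynomials: any convex polynomial
function decomposes as a linear function plus a function of the projection onto a
subspace `U`, where the latter admits a `μ`-strongly convex quadratic lower bound. -/
theorem convex_poly_structure {n : ℕ}
    (f : EuclideanSpace ℝ (Fin n) → ℝ)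
    (hpoly : ∃ p : MvPolynomial (Fin n) ℝ, ∀ x, f x = MvPolynomial.eval (fun i => x i) p)
    (hconv : ConvexOn ℝ Set.univ f) :
    ∃ (U : Submodule ℝ (EuclideanSpace ℝ (Fin n))) (w β : EuclideanSpace ℝ (Fin n))
      (α μ : ℝ),
      w ∈ Uᗮ ∧ 0 < μ ∧
      (∀ x, f x = f ((Submodule.orthogonalProjection U x : EuclideanSpace ℝ (Fin n))) - ⟪w, x⟫) ∧
      (∀ x, α + ⟪β, (Submodule.orthogonalProjection U x : EuclideanSpace ℝ (Fin n))⟫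
          + (μ / 2) * ‖(Submodule.orthogonalProjection U x : EuclideanSpace ℝ (Fin n))‖ ^ 2
          ≤ f ((Submodule.orthogonalProjection U x : EuclideanSpace ℝ (Fin n)))) := by
  obtain ⟨p, hp⟩ := hpoly
  have hdiff : DifferentiableAt ℝ f 0 := by
    rw [show f = fun x => MvPolynomial.eval (fun i => EuclideanSpace.proj i x) p from funext hp]
    exact (AnalyticOnNhd.eval_continuousLinearMap' _ p 0 (mem_univ 0)).differentiableAt
  set g := gradient f 0
  have hg (y : EuclideanSpace ℝ (Fin n)) : f 0 + ⟪g, y⟫ ≤ f y := by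
    simpa only [sub_zero] using hconv.add_inner_gradient_le hdiff y
  obtain ⟨c, hc, hgrowth⟩ := exists_sq_le_of_mem_orthogonal_linealitySpace hp hconv hg
  set U := (linealitySpace f)ᗮ
  have hU : Uᗮ ≤ linealitySpace f := (Submodule.orthogonal_orthogonal _).le
  refine ⟨U, -(g - U.starProjection g), g, f 0 - c, 2 * c,
    Uᗮ.neg_mem (U.sub_starProjection_mem_orthogonal g), by positivity, fun x => ?_, fun x => ?_⟩
  · rw [inner_neg_left, sub_neg_eq_add]
    exact eq_apply_starProjection_add_inner hg hU x
  · linarith [hgrowth _ (U.orthogonalProjectionOnto x).2]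
end

section
/- Let φ : ℝ^n → ℝ be convex and continuously differentiable. Then the range of the gradient of φ is almost convex: the interior of the convex hull of {∇φ(x) : x ∈ ℝ^n} is contained in {∇φ(x) : x ∈ ℝ^n}. -/
open Set Filter Metric InnerProductSpace
open scoped RealInnerProductSpace

/-!
If `y` lies in the interior of the convex hull of the gradients, then finitely many gradients
`∇φ xᵢ` already satisfy `max_i ⟪∇φ xᵢ - y, v⟫ ≥ ε ‖v‖` for all `v` (compactness of the unit
sphere). The supporting hyperplanes of `φ` at the `xᵢ` then show that `φ - ⟪y, ·⟫` grows at
least like `ε ‖v‖`, so it attains a global minimum, where its gradient `∇φ x₀ - y` vanishes.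
-/

theorem ConvexOn.add_le_of_hasFDerivAt {E : Type*} [NormedAddCommGroup E] [NormedSpace ℝ E]
    {s : Set E} {f : E → ℝ} {f' : E →L[ℝ] ℝ} {x z : E} (hf : ConvexOn ℝ s f)
    (hx : x ∈ s) (hz : z ∈ s) (hf' : HasFDerivAt f f' x) :
    f x + f' (z - x) ≤ f z := by
  have hline : ConvexOn ℝ (AffineMap.lineMap x z ⁻¹' s) (f ∘ AffineMap.lineMap (k := ℝ) x z) :=
    hf.comp_affineMap _
  have hderiv : HasDerivAt (f ∘ AffineMap.lineMap (k := ℝ) x z) (f' (z - x)) 0 := by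
    refine HasFDerivAt.comp_hasDerivAt (0 : ℝ) ?_ AffineMap.hasDerivAt_lineMap
    simpa using hf'
  have := hline.le_slope_of_hasDerivAt (by simpa using hx) (by simpa using hz) zero_lt_one hderiv
  simp only [slope, Function.comp_apply, AffineMap.lineMap_apply_one, AffineMap.lineMap_apply_zero,
    sub_zero, inv_one, one_smul, vsub_eq_sub] at this
  linarith

section InnerProductSpace

variable {E : Type*} [NormedAddCommGroup E] [InnerProductSpace ℝ E]

theorem exists_lt_inner_sub_of_mem_interior_convexHull {ι : Type*} {g : ι → E} {y : E}
    (hy : y ∈ interior (convexHull ℝ (range g))) :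
    ∃ ε > 0, ∀ u : E, ‖u‖ = 1 → ∃ i, ε < ⟪g i - y, u⟫ := by
  obtain ⟨δ, hδ, hball⟩ := isOpen_iff.1 isOpen_interior y hy
  refine ⟨δ / 4, by positivity, fun u hu => ?_⟩
  have hmem : y + (δ / 2) • u ∈ convexHull ℝ (range g) := by
    apply interior_subset
    apply hball
    rw [mem_ball, dist_eq_norm, add_sub_cancel_left, norm_smul, hu,
      Real.norm_of_nonneg (by positivity)]
    linarith
  obtain ⟨_, ⟨i, rfl⟩, hi⟩ := ((innerSL ℝ u).toLinearMap.convexOn convex_univ)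
    |>.exists_ge_of_mem_convexHull (subset_univ _) hmem
  refine ⟨i, ?_⟩
  simp only [ContinuousLinearMap.coe_coe, innerSL_apply_apply, inner_add_right,
    real_inner_smul_right, real_inner_self_eq_norm_sq, hu] at hi
  rw [inner_sub_left, real_inner_comm u, real_inner_comm u]
  linarith

variable [FiniteDimensional ℝ E]

theorem exists_finset_mul_norm_le_inner_sub_of_mem_interior_convexHull {ι : Type*} {g : ι → E}
    {y : E} (hy : y ∈ interior (convexHull ℝ (range g))) :
    ∃ ε > 0, ∃ t : Finset ι, ∀ v : E, ∃ i ∈ t, ε * ‖v‖ ≤ ⟪g i - y, v⟫ := by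
  obtain ⟨ε, hε, hsphere⟩ := exists_lt_inner_sub_of_mem_interior_convexHull hy
  obtain ⟨t, ht⟩ := (isCompact_sphere (0 : E) 1).elim_finite_subcover
    (fun i => {u | ε < ⟪g i - y, u⟫})
    (fun i => isOpen_lt continuous_const (continuous_const.inner continuous_id))
    (fun u hu => mem_iUnion.2 (hsphere u (mem_sphere_zero_iff_norm.1 hu)))
  classical
  obtain ⟨_, i₀, -⟩ := convexHull_nonempty_iff.1 ⟨y, interior_subset hy⟩
  refine ⟨ε, hε, insert i₀ t, fun v => ?_⟩
  rcases eq_or_ne v 0 with rfl | hv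
  · exact ⟨i₀, Finset.mem_insert_self _ _, by simp⟩
  have hv' : 0 < ‖v‖ := norm_pos_iff.2 hv
  have hunit : ‖v‖⁻¹ • v ∈ sphere (0 : E) 1 := by
    rw [mem_sphere_zero_iff_norm, norm_smul, norm_inv, norm_norm, inv_mul_cancel₀ hv'.ne']
  obtain ⟨i, hit, hi : ε < ⟪g i - y, ‖v‖⁻¹ • v⟫⟩ := mem_iUnion₂.1 (ht hunit)
  refine ⟨i, Finset.mem_insert_of_mem hit, ?_⟩
  rw [real_inner_smul_right, lt_inv_mul_iff₀ hv', mul_comm] at hi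
  exact hi.le

theorem ConvexOn.tendsto_sub_inner_cocompact_atTop {φ : E → ℝ} (hconv : ConvexOn ℝ univ φ)
    (hdiff : Differentiable ℝ φ) {y : E} {ε : ℝ} (hε : 0 < ε) {t : Finset E}
    (ht : ∀ v, ∃ x ∈ t, ε * ‖v‖ ≤ ⟪gradient φ x - y, v⟫) :
    Tendsto (fun v => φ v - ⟪y, v⟫) (cocompact E) atTop := by
  obtain ⟨C, hC⟩ := (t.image fun x => φ x - ⟪gradient φ x, x⟫).bddBelow
  have hlow : ∀ v, C + ε * ‖v‖ ≤ φ v - ⟪y, v⟫ := by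
    intro v
    obtain ⟨x, hx, hxv⟩ := ht v
    have hCx := hC (Finset.mem_image_of_mem _ hx)
    have hsupp := hconv.add_le_of_hasFDerivAt (mem_univ x) (mem_univ v)
      (hdiff x).hasGradientAt.hasFDerivAt
    rw [toDual_apply_apply, inner_sub_right] at hsupp
    rw [inner_sub_left] at hxv
    linarith
  exact tendsto_atTop_mono hlow <| tendsto_atTop_add_const_left _ C <|
    tendsto_norm_cocompact_atTop.const_mul_atTop hε

end InnerProductSpace

theorem gradient_eq_of_isLocalMin_sub_inner {E : Type*} [NormedAddCommGroup E]
    [InnerProductSpace ℝ E] [CompleteSpace E] {φ : E → ℝ} {x₀ y : E}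
    (hφ : DifferentiableAt ℝ φ x₀) (hmin : IsLocalMin (fun v => φ v - ⟪y, v⟫) x₀) :
    gradient φ x₀ = y := by
  have hderiv : HasFDerivAt (fun v => φ v - ⟪y, v⟫)
      (toDual ℝ E (gradient φ x₀) - toDual ℝ E y) x₀ :=
    hφ.hasGradientAt.hasFDerivAt.sub (toDual ℝ E y).hasFDerivAt
  exact (toDual ℝ E).injective (sub_eq_zero.1 (hmin.hasFDerivAt_eq_zero hderiv))

/-- The range of the gradient of a continuously differentiable convex
function is almost convex: the interior of its convex hull is contained in it. -/
theorem gradient_range_almost_convex {n : ℕ}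
    (φ : EuclideanSpace ℝ (Fin n) → ℝ)
    (hsmooth : ContDiff ℝ 1 φ) (hconv : ConvexOn ℝ Set.univ φ) :
    interior (convexHull ℝ (Set.range fun x => gradient φ x)) ⊆
      Set.range fun x => gradient φ x := by
  intro y hy
  have hdiff : Differentiable ℝ φ := hsmooth.differentiable one_ne_zero
  obtain ⟨ε, hε, t, ht⟩ := exists_finset_mul_norm_le_inner_sub_of_mem_interior_convexHull hy
  have hcoercive := hconv.tendsto_sub_inner_cocompact_atTop hdiff hε ht
  obtain ⟨x₀, hx₀⟩ :=
    (hdiff.continuous.sub (continuous_const.inner continuous_id)).exists_forall_le hcoercive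
  exact ⟨x₀, gradient_eq_of_isLocalMin_sub_inner (hdiff x₀) (.of_forall hx₀)⟩
end

section
/- Let M be an N×N symmetric positive semidefinite matrix with integer entries satisfying |M_ij| ≤ B for all i, j, where B ≥ 1. Then every nonzero eigenvalue of M is at least (B·N)^{-N}. -/
set_option maxHeartbeats 1000000

open Polynomial Matrix Finset in
/-- Every nonzero eigenvalue of an `N×N` symmetric positive semidefinite
integer matrix with entries bounded by `B ≥ 1` is at least `(B·N)^{-N}`. -/
theorem integer_psd_matrix_eigenvalue_lower_bound {N : ℕ}
    (M : Matrix (Fin N) (Fin N) ℤ) (hsymm : M.IsSymm)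
    (hpsd : (M.map (Int.cast : ℤ → ℝ)).PosSemidef)
    (B : ℤ) (hB : 1 ≤ B) (hbound : ∀ i j, |M i j| ≤ B) :
    ∀ μ : ℝ, μ ≠ 0 →
      (∃ v : Fin N → ℝ, v ≠ 0 ∧ (M.map (Int.cast : ℤ → ℝ)).mulVec v = μ • v) →
      (((B : ℝ) * N) ^ N)⁻¹ ≤ μ := by
  classical
  rintro μ hμ ⟨v, hv, hAv⟩
  rcases Nat.eq_zero_or_pos N with hN | hN
  · subst hN
    exact absurd (_root_.funext fun i => i.elim0) hv
  set A := M.map (Int.cast : ℤ → ℝ) with hAdef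
  have hA : A.IsHermitian := hpsd.1
  set lam := hA.eigenvalues with hlam
  have hlam0 : ∀ i, 0 ≤ lam i := hpsd.eigenvalues_nonneg
  have hNB : (1:ℝ) ≤ (B:ℝ) * N := by
    have h1 : (1:ℝ) ≤ (B:ℝ) := by exact_mod_cast hB
    have h2 : (1:ℝ) ≤ (N:ℝ) := by exact_mod_cast hN
    nlinarith
  have hNBpos : (0:ℝ) < (B:ℝ) * N := lt_of_lt_of_le one_pos hNB
  -- eval of charpoly is det (t • 1 - A)
  have hevaldet : ∀ t : ℝ, Polynomial.eval t A.charpoly = (t • 1 - A).det := by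
    intro t
    have h1 : Polynomial.eval t A.charpoly = ((charmatrix A).map (Polynomial.eval t)).det := by
      rw [Matrix.charpoly, ← Polynomial.coe_evalRingHom, RingHom.map_det]
      rfl
    rw [h1]
    congr 1
    ext i j
    by_cases h : i = j
    · subst h
      simp [charmatrix_apply_eq, Matrix.one_apply]
    · simp [charmatrix_apply_ne _ _ _ h, Matrix.one_apply, h]
  -- spectral theorem: det (t • 1 - A) = ∏ (t - lam i)
  set U : Matrix (Fin N) (Fin N) ℝ := (hA.eigenvectorUnitary : Matrix (Fin N) (Fin N) ℝ) with hU
  have hU1 : U * star U = 1 := (Matrix.mem_unitaryGroup_iff).mp hA.eigenvectorUnitary.2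
  have hU2 : star U * U = 1 := (Matrix.mem_unitaryGroup_iff').mp hA.eigenvectorUnitary.2
  have hdiag : ∀ t : ℝ, t • (1 : Matrix (Fin N) (Fin N) ℝ) - A
      = U * Matrix.diagonal (fun i => t - lam i) * star U := by
    intro t
    have hspec : A = U * Matrix.diagonal (RCLike.ofReal ∘ lam) * star U := hA.spectral_theorem
    have hdd : Matrix.diagonal (RCLike.ofReal ∘ lam) = Matrix.diagonal lam := by
      congr 1
    rw [hspec, hdd]
    have ht1 : t • (1 : Matrix (Fin N) (Fin N) ℝ) = U * (t • 1) * star U := by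
      rw [Matrix.mul_smul, Matrix.smul_mul, Matrix.mul_one, hU1]
    rw [ht1, ← Matrix.sub_mul, ← Matrix.mul_sub]
    congr 2
    rw [Matrix.smul_one_eq_diagonal, Matrix.diagonal_sub]
  have hdetprod : ∀ t : ℝ, (t • (1 : Matrix (Fin N) (Fin N) ℝ) - A).det = ∏ i, (t - lam i) := by
    intro t
    rw [hdiag t, Matrix.det_mul, Matrix.det_mul, mul_comm, ← mul_assoc, ← Matrix.det_mul, hU2,
      Matrix.det_one, one_mul, Matrix.det_diagonal]
  -- charpoly as a product
  have hcp : A.charpoly = ∏ i, (X - C (lam i)) := by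
    apply Polynomial.funext
    intro t
    rw [hevaldet t, hdetprod t, Polynomial.eval_prod]
    simp
  -- μ is an eigenvalue
  have hdet0 : (μ • (1 : Matrix (Fin N) (Fin N) ℝ) - A).det = 0 := by
    rw [← Matrix.exists_mulVec_eq_zero_iff]
    refine ⟨v, hv, ?_⟩
    rw [Matrix.sub_mulVec, Matrix.smul_mulVec, Matrix.one_mulVec, hAv, sub_self]
  have hprod0 : ∏ i, (μ - lam i) = 0 := by rw [← hdetprod μ]; exact hdet0
  obtain ⟨i0, -, hi0⟩ := Finset.prod_eq_zero_iff.mp hprod0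
  have hμlam : μ = lam i0 := by linarith [sub_eq_zero.mp hi0]
  have hμpos : 0 < μ := lt_of_le_of_ne (hμlam ▸ hlam0 i0) (Ne.symm hμ)
  -- the set of nonzero eigenvalues
  set S : Finset (Fin N) := Finset.univ.filter (fun i => lam i ≠ 0) with hS
  have hi0S : i0 ∈ S := by
    simp only [hS, Finset.mem_filter, Finset.mem_univ, true_and]
    rw [← hμlam]; exact hμ
  set k : ℕ := S.card with hk
  have hkN : k ≤ N := by simpa using Finset.card_le_card (Finset.subset_univ S)
  set P : ℝ := ∏ i ∈ S, lam i with hP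
  have hPpos : 0 < P := Finset.prod_pos fun i hi => by
    have := (Finset.mem_filter.mp hi).2
    exact lt_of_le_of_ne (hlam0 i) (Ne.symm this)
  -- charpoly = (∏ i in S, (X - C (lam i))) * X ^ (N - k)
  have hsplit : A.charpoly = (∏ i ∈ S, (X - C (lam i))) * X ^ (N - k) := by
    rw [hcp, ← Finset.prod_filter_mul_prod_filter_not Finset.univ (fun i => lam i ≠ 0)]
    congr 1
    have : ∀ i ∈ Finset.univ.filter (fun i => ¬ lam i ≠ 0),
        (X - C (lam i)) = (X : ℝ[X]) := by
      intro i hi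
      have : lam i = 0 := not_not.mp (Finset.mem_filter.mp hi).2
      rw [this, map_zero, sub_zero]
    rw [Finset.prod_congr rfl this, Finset.prod_const]
    congr 1
    have := Finset.card_filter_add_card_filter_not (s := Finset.univ)
      (p := fun i => lam i ≠ 0)
    simp only [Finset.card_univ, Fintype.card_fin] at this
    have hkk : k = (Finset.univ.filter (fun i => lam i ≠ 0)).card := rfl
    omega
  -- integrality: coeff (N - k) of charpoly is an integer, equals ± P
  set c : ℤ := M.charpoly.coeff (N - k) with hc
  have hcoeff : (c : ℝ) = (-1) ^ k * P := by
    have h1 : A.charpoly = M.charpoly.map (Int.castRingHom ℝ) := by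
      have h0 := Matrix.charpoly_map M (Int.castRingHom ℝ)
      rw [← h0]
      rfl
    have h2 : (c : ℝ) = A.charpoly.coeff (N - k) := by
      rw [h1, Polynomial.coeff_map]
      simp [hc]
    rw [h2, hsplit]
    have h3 : ((∏ i ∈ S, (X - C (lam i))) * X ^ (N - k)).coeff (0 + (N - k))
        = (∏ i ∈ S, (X - C (lam i))).coeff 0 := Polynomial.coeff_mul_X_pow _ _ _
    rw [zero_add] at h3
    rw [h3, Polynomial.coeff_zero_eq_eval_zero, Polynomial.eval_prod]
    simp only [Polynomial.eval_sub, Polynomial.eval_X, Polynomial.eval_C, zero_sub]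
    calc ∏ i ∈ S, -lam i = ∏ i ∈ S, ((-1) * lam i) := by simp [neg_one_mul]
      _ = (-1) ^ k * P := by rw [Finset.prod_mul_distrib, Finset.prod_const]
  have hcne : c ≠ 0 := by
    intro h
    rw [h] at hcoeff
    simp only [Int.cast_zero] at hcoeff
    have : P = 0 := by
      rcases Nat.even_or_odd k with he | ho
      · rw [he.neg_one_pow] at hcoeff; linarith
      · rw [ho.neg_one_pow] at hcoeff; linarith
    linarith
  have hP1 : 1 ≤ P := by
    have h1 : (1:ℝ) ≤ |(c:ℝ)| := by
      have := Int.one_le_abs hcne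
      calc (1:ℝ) ≤ (|c| : ℤ) := by exact_mod_cast this
        _ = |(c:ℝ)| := by push_cast; ring
    rw [hcoeff, abs_mul, abs_pow, abs_neg, abs_one, one_pow, one_mul,
      abs_of_pos hPpos] at h1
    exact h1
  -- each eigenvalue ≤ B * N via trace
  have htrace : ∑ i, lam i = A.trace := by
    have h1 : A.trace = (U * Matrix.diagonal (fun i : Fin N => lam i) * star U).trace := by
      congr 1
      have hspec : A = U * Matrix.diagonal (RCLike.ofReal ∘ lam) * star U := hA.spectral_theorem
      rw [hspec]
      congr 1
    rw [h1, Matrix.trace_mul_cycle, hU2, Matrix.one_mul,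
      Matrix.trace_diagonal]
  have htraceB : A.trace ≤ (B:ℝ) * N := by
    have h1 : A.trace = ∑ i, ((M i i : ℤ) : ℝ) := by
      rw [Matrix.trace]
      simp [hAdef, Matrix.diag]
    rw [h1]
    calc ∑ i, ((M i i : ℤ) : ℝ) ≤ ∑ _i : Fin N, (B:ℝ) := by
          apply Finset.sum_le_sum
          intro i _
          exact_mod_cast le_trans (le_abs_self _) (hbound i i)
      _ = (N:ℝ) * B := by rw [Finset.sum_const]; simp [mul_comm]
      _ = (B:ℝ) * N := by ring
  have hlamB : ∀ i, lam i ≤ (B:ℝ) * N := by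
    intro i
    calc lam i ≤ ∑ j, lam j :=
          Finset.single_le_sum (fun j _ => hlam0 j) (Finset.mem_univ i)
      _ = A.trace := htrace
      _ ≤ (B:ℝ) * N := htraceB
  -- put it together
  have hPle : P ≤ μ * ((B:ℝ) * N) ^ N := by
    have h1 : P = lam i0 * ∏ i ∈ S.erase i0, lam i :=
      (Finset.mul_prod_erase S lam hi0S).symm
    have h2 : ∏ i ∈ S.erase i0, lam i ≤ ((B:ℝ) * N) ^ (S.erase i0).card := by
      rw [← Finset.prod_const]
      exact Finset.prod_le_prod (fun i _ => hlam0 i) (fun i _ => hlamB i)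
    have h3 : ((B:ℝ) * N) ^ (S.erase i0).card ≤ ((B:ℝ) * N) ^ N := by
      apply pow_le_pow_right₀ hNB
      calc (S.erase i0).card ≤ S.card := Finset.card_erase_le
        _ ≤ N := hkN
    calc P = lam i0 * ∏ i ∈ S.erase i0, lam i := h1
      _ ≤ lam i0 * ((B:ℝ) * N) ^ N := by
          apply mul_le_mul_of_nonneg_left (le_trans h2 h3) (hlam0 i0)
      _ = μ * ((B:ℝ) * N) ^ N := by rw [← hμlam]
  have hpowpos : (0:ℝ) < ((B:ℝ) * N) ^ N := pow_pos hNBpos N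
  rw [inv_le_iff_one_le_mul₀ hpowpos]
  calc (1:ℝ) ≤ P := hP1
    _ ≤ μ * ((B:ℝ) * N) ^ N := hPle
end

section
/- Let f : ℝ^n → ℝ be a convex polynomial function and let P = {x ∈ ℝ^n : A x ≤ b} be a nonempty polyhedron. Suppose there are a linear subspace U ⊆ ℝ^n, a vector w ∈ U^⊥, constants α ∈ ℝ, β ∈ ℝ^n, and μ > 0 such that for all x ∈ ℝ^n: f(x) = f(x_U) − ⟨w, x⟩ and f(x_U) ≥ α + ⟨β, x_U⟩ + (μ/2)·‖x_U‖². Then f is unbounded from below on P if and only if there exists x⁰ ∈ ℝ^n with A x⁰ ≤ 0 (componentwise), x⁰ ∈ U^⊥, and ⟨w, x⁰⟩ = 1. -/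
/-!
Moving from a point of `P` along `x⁰` stays in `P` and fixes `x_U`, so `f` decreases linearly.
Conversely, if no such `x⁰` exists, Farkas' lemma applied to the rows `aᵢ` of `A` projected onto
`U^⊥` writes `w = ∑ cᵢ (aᵢ - (aᵢ)_U)` with `cᵢ ≥ 0`. On `P` this gives
`⟪w, x⟫ ≤ ∑ cᵢ bᵢ + ⟪u, x_U⟫` for some `u ∈ U`, hence
`f x ≥ α - ∑ cᵢ bᵢ + ⟪β - u, x_U⟫ + μ/2 ‖x_U‖²`, which is bounded below by completing the square.
Farkas' lemma itself is proved by eliminating one generator at a time (Fourier–Motzkin).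
-/

open RealInnerProductSpace

variable {V : Type*} [NormedAddCommGroup V] [InnerProductSpace ℝ V]

lemma inner_sub_div_smul_comm (a d d' v : V) :
    ⟪v, d' - (⟪a, d'⟫ / ⟪a, d⟫) • d⟫ = ⟪v - (⟪v, d⟫ / ⟪a, d⟫) • a, d'⟫ := by
  simp only [inner_sub_left, inner_sub_right, real_inner_smul_left, real_inner_smul_right]
  ring

theorem mem_hull_or_exists_inner_nonpos_inner_pos (s : Finset V) (w : V) :
    w ∈ PointedCone.hull ℝ (s : Set V) ∨ ∃ d, (∀ a ∈ s, ⟪a, d⟫ ≤ 0) ∧ 0 < ⟪w, d⟫ := by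
  classical
  induction hn : s.card using Nat.strong_induction_on generalizing s w with
  | _ n ih =>
  subst hn
  rcases s.eq_empty_or_nonempty with rfl | ⟨a, ha⟩
  · by_cases hw : w = 0
    · exact .inl (hw ▸ zero_mem _)
    · exact .inr ⟨w, by simp, real_inner_self_pos.mpr hw⟩
  have hsub : PointedCone.hull ℝ ((s.erase a : Finset V) : Set V) ≤
      PointedCone.hull ℝ (s : Set V) :=
    Submodule.span_mono (by simp)
  rcases ih _ (Finset.card_erase_lt_of_mem ha) (s.erase a) w rfl with hw | ⟨d, hd, hwd⟩
  · exact .inl (hsub hw)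
  by_cases had : ⟪a, d⟫ ≤ 0
  · refine .inr ⟨d, fun v hv => ?_, hwd⟩
    rcases eq_or_ne v a with rfl | hva
    · exact had
    · exact hd v (Finset.mem_erase.mpr ⟨hva, hv⟩)
  rw [not_le] at had
  -- `ψ` projects along `a` onto the hyperplane `⟪·, d⟫ = 0`, eliminating the generator `a`.
  set ψ : V → V := fun v => v - (⟪v, d⟫ / ⟪a, d⟫) • a with hψ
  have ha' : a ∈ PointedCone.hull ℝ (s : Set V) := PointedCone.subset_hull (Finset.mem_coe.mpr ha)
  have hψ_sub : (((s.erase a).image ψ : Finset V) : Set V) ⊆ PointedCone.hull ℝ (s : Set V) := by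
    simp only [Finset.coe_image, Set.image_subset_iff]
    intro v hv
    have hc : 0 ≤ -(⟪v, d⟫ / ⟪a, d⟫) :=
      neg_nonneg.mpr (div_nonpos_of_nonpos_of_nonneg (hd v hv) had.le)
    have := add_mem (hsub (PointedCone.subset_hull hv)) (Submodule.smul_mem _ ⟨_, hc⟩ ha')
    simpa [hψ, sub_eq_add_neg, neg_smul] using this
  rcases ih _ ((Finset.card_image_le).trans_lt (Finset.card_erase_lt_of_mem ha))
      ((s.erase a).image ψ) (ψ w) rfl with hw | ⟨d', hd', hwd'⟩
  · have hψw : w = ψ w + (⟪w, d⟫ / ⟪a, d⟫) • a := by simp [hψ]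
    rw [hψw]
    exact .inl (add_mem (Submodule.span_le.mpr hψ_sub hw)
      (Submodule.smul_mem _ ⟨_, (div_pos hwd had).le⟩ ha'))
  · refine .inr ⟨d' - (⟪a, d'⟫ / ⟪a, d⟫) • d, fun v hv => ?_, ?_⟩
    · rw [inner_sub_div_smul_comm]
      rcases eq_or_ne v a with rfl | hva
      · simp [had.ne']
      · exact hd' _ (Finset.mem_image_of_mem ψ (Finset.mem_erase.mpr ⟨hva, hv⟩))
    · rwa [inner_sub_div_smul_comm]

def innerBoundedModulo (U : Submodule ℝ V) (P : Set V) : PointedCone ℝ V where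
  carrier := {v | ∃ B, ∃ u ∈ U, ∀ x ∈ P, ⟪v, x⟫ ≤ B + ⟪u, x⟫}
  zero_mem' := ⟨0, 0, U.zero_mem, fun x _ => by simp⟩
  add_mem' := by
    rintro v v' ⟨B, u, hu, hB⟩ ⟨B', u', hu', hB'⟩
    refine ⟨B + B', u + u', U.add_mem hu hu', fun x hx => ?_⟩
    simp only [inner_add_left]
    linarith [hB x hx, hB' x hx]
  smul_mem' := by
    rintro c v ⟨B, u, hu, hB⟩
    refine ⟨c * B, (c : ℝ) • u, U.smul_mem _ hu, fun x hx => ?_⟩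
    rw [← Nonneg.coe_smul, real_inner_smul_left, real_inner_smul_left, ← mul_add]
    exact mul_le_mul_of_nonneg_left (hB x hx) c.2

@[simp]
lemma mem_innerBoundedModulo {U : Submodule ℝ V} {P : Set V} {v : V} :
    v ∈ innerBoundedModulo U P ↔ ∃ B, ∃ u ∈ U, ∀ x ∈ P, ⟪v, x⟫ ≤ B + ⟪u, x⟫ :=
  Iff.rfl

lemma neg_sq_norm_div_le_inner_add_sq_norm (c y : V) {μ : ℝ} (hμ : 0 < μ) :
    -(‖c‖ ^ 2 / (2 * μ)) ≤ ⟪c, y⟫ + μ / 2 * ‖y‖ ^ 2 := by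
  have hsq : ‖c + μ • y‖ ^ 2 / (2 * μ) = ‖c‖ ^ 2 / (2 * μ) + (⟪c, y⟫ + μ / 2 * ‖y‖ ^ 2) := by
    rw [norm_add_sq_real, real_inner_smul_right, norm_smul, Real.norm_of_nonneg hμ.le]
    field_simp
    ring
  linarith [div_nonneg (sq_nonneg ‖c + μ • y‖) (by positivity : (0 : ℝ) ≤ 2 * μ)]

variable (U : Submodule ℝ V) [U.HasOrthogonalProjection] {f : V → ℝ} {w : V}

theorem exists_recession_direction_or_inner_le {ι : Type*} [Fintype ι] (r : ι → V) (b : ι → ℝ)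
    (hw : w ∈ Uᗮ) :
    (∃ x₀, (∀ i, ⟪r i, x₀⟫ ≤ 0) ∧ x₀ ∈ Uᗮ ∧ ⟪w, x₀⟫ = 1) ∨
      ∃ B, ∃ u ∈ U, ∀ x, (∀ i, ⟪r i, x⟫ ≤ b i) → ⟪w, x⟫ ≤ B + ⟪u, x⟫ := by
  classical
  rcases mem_hull_or_exists_inner_nonpos_inner_pos
    (Finset.univ.image fun i => Uᗮ.starProjection (r i)) w with hw' | ⟨d, hd, hwd⟩
  · refine .inr (mem_innerBoundedModulo.mp (Submodule.span_le.mpr ?_ hw'))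
    intro v hv
    obtain ⟨i, -, rfl⟩ := Finset.mem_image.mp hv
    refine ⟨b i, -U.starProjection (r i), U.neg_mem (U.starProjection_apply_mem _), fun x hx => ?_⟩
    simp only [Submodule.starProjection_orthogonal_val, inner_sub_left, inner_neg_left]
    linarith [hx i]
  · have hd' : ∀ v, ⟪v, Uᗮ.starProjection d⟫ = ⟪Uᗮ.starProjection v, d⟫ := fun v =>
      (Uᗮ.inner_starProjection_left_eq_right v d).symm
    have hwd' : ⟪w, Uᗮ.starProjection d⟫ = ⟪w, d⟫ := by
      rw [hd', Submodule.starProjection_eq_self_iff.mpr hw]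
    refine .inl ⟨⟪w, d⟫⁻¹ • Uᗮ.starProjection d, fun i => ?_, ?_, ?_⟩
    · rw [real_inner_smul_right, hd']
      exact mul_nonpos_of_nonneg_of_nonpos (inv_nonneg.mpr hwd.le)
        (hd _ (Finset.mem_image_of_mem _ (Finset.mem_univ i)))
    · exact Uᗮ.smul_mem _ (Uᗮ.starProjection_apply_mem d)
    · rw [real_inner_smul_right, hwd', inv_mul_cancel₀ hwd.ne']

theorem bddBelow_image_of_inner_le {β : V} {α μ : ℝ} (hμ : 0 < μ)
    (hdecomp : ∀ x, f x = f (U.starProjection x) - ⟪w, x⟫)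
    (hlb : ∀ x, α + ⟪β, U.starProjection x⟫ + μ / 2 * ‖U.starProjection x‖ ^ 2
      ≤ f (U.starProjection x))
    {P : Set V} {B : ℝ} {u : V} (hu : u ∈ U) (hB : ∀ x ∈ P, ⟪w, x⟫ ≤ B + ⟪u, x⟫) :
    BddBelow (f '' P) := by
  refine ⟨α - B - ‖β - u‖ ^ 2 / (2 * μ), ?_⟩
  rintro _ ⟨x, hx, rfl⟩
  have hux : ⟪u, x⟫ = ⟪u, U.starProjection x⟫ := by
    rw [← U.inner_starProjection_left_eq_right, U.starProjection_eq_self_iff.mpr hu]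
  have hq := neg_sq_norm_div_le_inner_add_sq_norm (β - u) (U.starProjection x) hμ
  rw [inner_sub_left] at hq
  linarith [hdecomp x, hlb x, hB x hx]

theorem not_bddBelow_image_of_recession_direction {ι : Type*} {r : ι → V} {b : ι → ℝ}
    (hdecomp : ∀ x, f x = f (U.starProjection x) - ⟪w, x⟫)
    (hne : {x | ∀ i, ⟪r i, x⟫ ≤ b i}.Nonempty) {x₀ : V} (hr : ∀ i, ⟪r i, x₀⟫ ≤ 0)
    (hx₀ : x₀ ∈ Uᗮ) (hwx₀ : ⟪w, x₀⟫ = 1) :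
    ¬ BddBelow (f '' {x | ∀ i, ⟪r i, x⟫ ≤ b i}) := by
  obtain ⟨p, hp⟩ := hne
  have hmem : ∀ t : ℝ, 0 ≤ t → p + t • x₀ ∈ {x | ∀ i, ⟪r i, x⟫ ≤ b i} := fun t ht i => by
    rw [inner_add_right, real_inner_smul_right]
    nlinarith [hp i, hr i]
  have hf : ∀ t : ℝ, f (p + t • x₀) = f p - t := fun t => by
    rw [hdecomp, hdecomp p, map_add, map_smul, U.starProjection_apply_eq_zero_iff.mpr hx₀,
      smul_zero, add_zero, inner_add_right, real_inner_smul_right, hwx₀]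
    ring
  rintro ⟨c, hc⟩
  have := hc ⟨_, hmem (max 0 (f p - c + 1)) (le_max_left _ _), rfl⟩
  rw [hf] at this
  linarith [le_max_right 0 (f p - c + 1)]

lemma Matrix.mulVec_apply_eq_inner_toLp {ι κ : Type*} [Fintype κ] (A : Matrix ι κ ℝ)
    (x : EuclideanSpace ℝ κ) (i : ι) :
    A.mulVec (fun j => x j) i = ⟪WithLp.toLp 2 (A i), x⟫ := by
  rw [EuclideanSpace.inner_eq_star_dotProduct, star_trivial, dotProduct_comm]
  rfl

theorem unbounded_below_iff_recession_direction_general {n m : ℕ}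
    (f : EuclideanSpace ℝ (Fin n) → ℝ)
    (A : Matrix (Fin m) (Fin n) ℝ) (b : Fin m → ℝ)
    (P : Set (EuclideanSpace ℝ (Fin n)))
    (hP : P = {x | ∀ i, A.mulVec (fun j => x j) i ≤ b i})
    (hne : P.Nonempty)
    (U : Submodule ℝ (EuclideanSpace ℝ (Fin n)))
    (w β : EuclideanSpace ℝ (Fin n)) (α μ : ℝ)
    (hw : w ∈ Uᗮ) (hμ : 0 < μ)
    (hdecomp : ∀ x, f x = f ((U.orthogonalProjection x : EuclideanSpace ℝ (Fin n))) - ⟪w, x⟫)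
    (hlb : ∀ x, α + ⟪β, (U.orthogonalProjection x : EuclideanSpace ℝ (Fin n))⟫
        + (μ / 2) * ‖(U.orthogonalProjection x : EuclideanSpace ℝ (Fin n))‖ ^ 2
        ≤ f ((U.orthogonalProjection x : EuclideanSpace ℝ (Fin n)))) :
    ¬ BddBelow (f '' P) ↔
      ∃ x0 : EuclideanSpace ℝ (Fin n),
        (∀ i, A.mulVec (fun j => x0 j) i ≤ 0) ∧ x0 ∈ Uᗮ ∧ ⟪w, x0⟫ = 1 := by
  simp only [Matrix.mulVec_apply_eq_inner_toLp] at hP ⊢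
  subst hP
  constructor
  · intro hunb
    refine (exists_recession_direction_or_inner_le U _ b hw).resolve_right ?_
    rintro ⟨B, u, hu, hB⟩
    exact hunb (bddBelow_image_of_inner_le U hμ hdecomp hlb hu hB)
  · rintro ⟨x₀, hr, hx₀, hwx₀⟩
    exact not_bddBelow_image_of_recession_direction U hdecomp hne hr hx₀ hwx₀

/-- Given the structural decomposition of a convex polynomial `f`,
`f` is unbounded from below on the nonempty polyhedron `P = {x : Ax ≤ b}` if and only
if there is `x⁰` with `Ax⁰ ≤ 0`, `x⁰ ∈ U^⊥` and `⟨w, x⁰⟩ = 1`. -/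
theorem unbounded_below_iff_recession_direction {n m : ℕ}
    (f : EuclideanSpace ℝ (Fin n) → ℝ)
    (hpoly : ∃ p : MvPolynomial (Fin n) ℝ, ∀ x, f x = MvPolynomial.eval (fun i => x i) p)
    (hconv : ConvexOn ℝ Set.univ f)
    (A : Matrix (Fin m) (Fin n) ℝ) (b : Fin m → ℝ)
    (P : Set (EuclideanSpace ℝ (Fin n)))
    (hP : P = {x | ∀ i, A.mulVec (fun j => x j) i ≤ b i})
    (hne : P.Nonempty)
    (U : Submodule ℝ (EuclideanSpace ℝ (Fin n)))
    (w β : EuclideanSpace ℝ (Fin n)) (α μ : ℝ)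
    (hw : w ∈ Uᗮ) (hμ : 0 < μ)
    (hdecomp : ∀ x, f x = f ((U.orthogonalProjection x : EuclideanSpace ℝ (Fin n))) - ⟪w, x⟫)
    (hlb : ∀ x, α + ⟪β, (U.orthogonalProjection x : EuclideanSpace ℝ (Fin n))⟫
        + (μ / 2) * ‖(U.orthogonalProjection x : EuclideanSpace ℝ (Fin n))‖ ^ 2
        ≤ f ((U.orthogonalProjection x : EuclideanSpace ℝ (Fin n)))) :
    ¬ BddBelow (f '' P) ↔
      ∃ x0 : EuclideanSpace ℝ (Fin n),
        (∀ i, A.mulVec (fun j => x0 j) i ≤ 0) ∧ x0 ∈ Uᗮ ∧ ⟪w, x0⟫ = 1 :=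
  unbounded_below_iff_recession_direction_general f A b P hP hne U w β α μ hw hμ hdecomp hlb
end

section
/- Let f : ℝ^n → ℝ be a convex polynomial function and let P = {x ∈ ℝ^n : A x ≤ b} be a nonempty polyhedron. Suppose there are a linear subspace U ⊆ ℝ^n, a vector w ∈ U^⊥, constants α ∈ ℝ, β ∈ ℝ^n, and μ > 0 such that for all x ∈ ℝ^n: f(x) = f(x_U) − ⟨w, x⟩ and f(x_U) ≥ α + ⟨β, x_U⟩ + (μ/2)·‖x_U‖². If f is bounded from below on P, then there exists a vector λ ∈ ℝ^m with λ ≥ 0 (componentwise) and a vector u ∈ U such that w = Aᵀλ + u. -/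
/-!
Moving from a point of `P` along a direction `d ∈ Uᗮ` with `A d ≤ 0` stays in `P` and, by the
decomposition of `f`, changes `f` by exactly `-t ⟪w, d⟫`; boundedness from below therefore forces
`⟪w, d⟫ ≤ 0` for every such `d`. This is the dual condition of Farkas' lemma for the cone
generated by the rows of `A` plus the subspace `U`, which is obtained from the plain Farkas lemma
after projecting onto `Uᗮ`. The plain Farkas lemma is hyperplane separation from a closed cone,
and a finitely generated cone is closed because, by Carathéodory's theorem for cones, it is a
finite union of cones over linearly independent sets.
-/

open RealInnerProductSpace

namespace PointedCone

section Caratheodory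

variable {E : Type*} [AddCommGroup E] [Module ℝ E] {x : E}

theorem mem_hull_finset_iff {s : Finset E} :
    x ∈ hull ℝ (s : Set E) ↔ ∃ c : E → ℝ, (∀ y ∈ s, 0 ≤ c y) ∧ ∑ y ∈ s, c y • y = x := by
  classical
  rw [Submodule.mem_span_finset]
  constructor
  · rintro ⟨c, -, rfl⟩
    exact ⟨fun y => c y, fun y _ => (c y).2, rfl⟩
  · rintro ⟨c, hc, rfl⟩
    refine ⟨fun y => if hy : y ∈ s then ⟨c y, hc y hy⟩ else 0,
      Function.support_subset_iff'.2 fun y hy => dif_neg hy,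
      Finset.sum_congr rfl fun y hy => ?_⟩
    simp only [dif_pos hy]
    rfl

theorem exists_mem_hull_erase_of_sum_smul_eq_zero [DecidableEq E] {s : Finset E} {c g : E → ℝ}
    (hc : ∀ y ∈ s, 0 ≤ c y) (hg : ∑ y ∈ s, g y • y = 0) (hpos : ∃ y ∈ s, 0 < g y) :
    ∃ z ∈ s, ∑ y ∈ s, c y • y ∈ hull ℝ (s.erase z : Set E) := by
  obtain ⟨z, hz, hmin⟩ := Finset.exists_min_image (s.filter (0 < g ·)) (fun y => c y / g y)
    (by simpa [Finset.Nonempty] using hpos)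
  rw [Finset.mem_filter] at hz
  set θ := c z / g z
  have hθ : 0 ≤ θ := div_nonneg (hc z hz.1) hz.2.le
  -- `θ` is the largest step along `-g` keeping the coefficients nonnegative; it kills `z`.
  have hc' : ∀ y ∈ s, 0 ≤ c y - θ * g y := by
    intro y hy
    rcases le_or_gt (g y) 0 with hgy | hgy
    · nlinarith [hc y hy]
    · have := hmin y (Finset.mem_filter.2 ⟨hy, hgy⟩)
      rw [le_div_iff₀ hgy] at this
      linarith
  have hz0 : c z - θ * g z = 0 := by
    simp only [θ, div_mul_cancel₀ _ hz.2.ne', sub_self]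
  refine ⟨z, hz.1, mem_hull_finset_iff.2 ⟨fun y => c y - θ * g y,
    fun y hy => hc' y (Finset.mem_of_mem_erase hy), ?_⟩⟩
  rw [Finset.sum_erase _ (by simp only [hz0, zero_smul])]
  simp only [sub_smul, mul_smul, Finset.sum_sub_distrib, ← Finset.smul_sum, hg, smul_zero,
    sub_zero]

theorem exists_mem_hull_erase_of_not_linearIndepOn [DecidableEq E] {s : Finset E}
    (hs : ¬LinearIndepOn ℝ id (s : Set E)) (hx : x ∈ hull ℝ (s : Set E)) :
    ∃ z ∈ s, x ∈ hull ℝ (s.erase z : Set E) := by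
  obtain ⟨c, hc, rfl⟩ := mem_hull_finset_iff.1 hx
  obtain ⟨g, hg, y, hy, hgy⟩ := not_linearIndepOn_finset_iff.1 hs
  rcases hgy.lt_or_gt with hneg | hpos
  · refine exists_mem_hull_erase_of_sum_smul_eq_zero hc (g := -g) ?_ ⟨y, hy, by simpa⟩
    simpa [neg_smul] using hg
  · exact exists_mem_hull_erase_of_sum_smul_eq_zero hc hg ⟨y, hy, hpos⟩

theorem exists_linearIndepOn_of_mem_hull {s : Finset E} (hx : x ∈ hull ℝ (s : Set E)) :
    ∃ t ⊆ s, LinearIndepOn ℝ id (t : Set E) ∧ x ∈ hull ℝ (t : Set E) := by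
  classical
  induction s using Finset.strongInduction with
  | H s ih =>
    by_cases hs : LinearIndepOn ℝ id (s : Set E)
    · exact ⟨s, subset_rfl, hs, hx⟩
    obtain ⟨z, hz, hxz⟩ := exists_mem_hull_erase_of_not_linearIndepOn hs hx
    obtain ⟨t, hts, ht, hxt⟩ := ih _ (Finset.erase_ssubset hz) hxz
    exact ⟨t, hts.trans (Finset.erase_subset _ _), ht, hxt⟩

end Caratheodory

section Closed

variable {E : Type*} [NormedAddCommGroup E] [NormedSpace ℝ E]

-- `C` is the image of the closed orthant of `s → ℝ` under the injective map `c ↦ ∑ c y • y`.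
theorem IsSimplicial.isClosed {C : PointedCone ℝ E} (hC : C.IsSimplicial) :
    IsClosed (C : Set E) := by
  obtain ⟨s, hs, hli, rfl⟩ := hC
  obtain ⟨s, rfl⟩ := hs.exists_finset_coe
  have hemb := LinearMap.isClosedEmbedding_of_injective
    (LinearMap.ker_eq_bot.2 (linearIndependent_iff_injective_fintypeLinearCombination.1 hli))
  convert hemb.isClosedMap _ (isClosed_Ici (a := (0 : s → ℝ)))
  ext x
  simp only [SetLike.mem_coe, Submodule.mem_span_finset', Set.mem_image, Set.mem_Ici,
    Fintype.linearCombination_apply]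
  constructor
  · rintro ⟨c, rfl⟩
    exact ⟨fun y => c y, fun y => (c y).2, rfl⟩
  · rintro ⟨c, hc, rfl⟩
    exact ⟨fun y => ⟨c y, hc y⟩, rfl⟩

theorem isClosed_hull_of_finite [FiniteDimensional ℝ E] {s : Set E} (hs : s.Finite) :
    IsClosed (hull ℝ s : Set E) := by
  classical
  obtain ⟨s, rfl⟩ := hs.exists_finset_coe
  have hunion : (hull ℝ (s : Set E) : Set E) =
      ⋃ (t : Finset E) (_ : t ∈ s.powerset.filter
          fun t : Finset E => LinearIndepOn ℝ id (t : Set E)), (hull ℝ (t : Set E) : Set E) := by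
    refine subset_antisymm (fun x hx => ?_) (Set.iUnion₂_subset fun t ht => ?_)
    · obtain ⟨t, hts, ht, hxt⟩ := exists_linearIndepOn_of_mem_hull hx
      exact Set.mem_biUnion (Finset.mem_filter.2 ⟨Finset.mem_powerset.2 hts, ht⟩) hxt
    · exact Submodule.span_mono
        (Finset.coe_subset.2 (Finset.mem_powerset.1 (Finset.mem_filter.1 ht).1))
  rw [hunion]
  exact isClosed_biUnion_finset fun t ht =>
    (IsSimplicial.hull t.finite_toSet (Finset.mem_filter.1 ht).2).isClosed

end Closed

theorem mem_hull_of_forall_inner_nonneg {E : Type*} [NormedAddCommGroup E]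
    [InnerProductSpace ℝ E] [FiniteDimensional ℝ E] {s : Set E} (hs : s.Finite) {w : E}
    (h : ∀ y, (∀ v ∈ s, 0 ≤ ⟪v, y⟫) → 0 ≤ ⟪w, y⟫) : w ∈ hull ℝ s := by
  by_contra hw
  obtain ⟨y, hy, hwy⟩ := ProperCone.hyperplane_separation'
    (C := ⟨hull ℝ s, isClosed_hull_of_finite hs⟩) hw
  exact hwy.not_ge (h y fun v hv => hy v (subset_hull hv))

end PointedCone

section Farkas

variable {E : Type*} [NormedAddCommGroup E] [InnerProductSpace ℝ E] [FiniteDimensional ℝ E]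
  {ι : Type*} [Fintype ι]

theorem exists_nonneg_sum_smul_eq_of_forall_inner_nonneg (v : ι → E) {w : E}
    (h : ∀ y, (∀ i, 0 ≤ ⟪v i, y⟫) → 0 ≤ ⟪w, y⟫) :
    ∃ l : ι → ℝ, (∀ i, 0 ≤ l i) ∧ ∑ i, l i • v i = w := by
  have hw := PointedCone.mem_hull_of_forall_inner_nonneg (Set.finite_range v)
    (w := w) fun y hy => h y fun i => hy _ ⟨i, rfl⟩
  obtain ⟨c, rfl⟩ := (Submodule.mem_span_range_iff_exists_fun _).1 hw
  exact ⟨fun i => c i, fun i => (c i).2, rfl⟩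

theorem exists_nonneg_sum_smul_add_mem_of_forall_inner_nonneg (v : ι → E) (U : Submodule ℝ E)
    {w : E} (h : ∀ y ∈ Uᗮ, (∀ i, 0 ≤ ⟪v i, y⟫) → 0 ≤ ⟪w, y⟫) :
    ∃ l : ι → ℝ, (∀ i, 0 ≤ l i) ∧ ∃ u ∈ U, w = ∑ i, l i • v i + u := by
  obtain ⟨l, hl, hlw⟩ := exists_nonneg_sum_smul_eq_of_forall_inner_nonneg
    (fun i => Uᗮ.starProjection (v i)) (w := Uᗮ.starProjection w) fun y hy => by
      simp only [Submodule.inner_starProjection_left_eq_right] at hy ⊢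
      exact h _ (Submodule.starProjection_apply_mem _ _) hy
  refine ⟨l, hl, U.starProjection w - ∑ i, l i • U.starProjection (v i),
    sub_mem (U.starProjection_apply_mem w)
      (sum_mem fun i _ => U.smul_mem _ (U.starProjection_apply_mem _)), ?_⟩
  have hv : ∑ i, l i • v i =
      ∑ i, l i • U.starProjection (v i) + ∑ i, l i • Uᗮ.starProjection (v i) := by
    simp only [← Finset.sum_add_distrib, ← smul_add, U.starProjection_add_starProjection_orthogonal]
  rw [hv, hlw]
  nth_rw 1 [← U.starProjection_add_starProjection_orthogonal w]
  abel

end Farkas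

theorem nonpos_of_bddBelow_image_ray {F : Type*} [AddCommGroup F] [Module ℝ F] {f : F → ℝ}
    {S : Set F} {x₀ d : F} {c : ℝ} (hray : ∀ t : ℝ, 0 ≤ t → x₀ + t • d ∈ S)
    (hf : ∀ t : ℝ, f (x₀ + t • d) = f x₀ - t * c) (hbdd : BddBelow (f '' S)) : c ≤ 0 := by
  by_contra! hc
  obtain ⟨B, hB⟩ := hbdd
  have hB₀ : B ≤ f x₀ := hB ⟨x₀, by simpa using hray 0 le_rfl, rfl⟩
  have ht : 0 ≤ (f x₀ - B + 1) / c := div_nonneg (by linarith) hc.le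
  have := hB ⟨_, hray _ ht, rfl⟩
  rw [hf, div_mul_cancel₀ _ hc.ne'] at this
  linarith

theorem inner_nonpos_of_bddBelow_of_mem_orthogonal {E : Type*} [NormedAddCommGroup E]
    [InnerProductSpace ℝ E] {ι : Type*} {f : E → ℝ} {U : Submodule ℝ E}
    [U.HasOrthogonalProjection] {w : E} (hf : ∀ x, f x = f (U.starProjection x) - ⟪w, x⟫)
    {a : ι → E} {b : ι → ℝ} (hne : ∃ x₀, ∀ i, ⟪a i, x₀⟫ ≤ b i)
    (hbdd : BddBelow (f '' {x | ∀ i, ⟪a i, x⟫ ≤ b i})) {d : E} (hd : d ∈ Uᗮ)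
    (had : ∀ i, ⟪a i, d⟫ ≤ 0) : ⟪w, d⟫ ≤ 0 := by
  obtain ⟨x₀, hx₀⟩ := hne
  refine nonpos_of_bddBelow_image_ray (x₀ := x₀) (d := d) ?_ (fun t => ?_) hbdd
  · intro t ht i
    rw [inner_add_right, real_inner_smul_right]
    nlinarith [hx₀ i, had i]
  · rw [hf, hf x₀, map_add, map_smul, (U.starProjection_apply_eq_zero_iff).2 hd,
      smul_zero, add_zero, inner_add_right, real_inner_smul_right]
    ring

theorem farkas_certificate_of_bounded_below_general {n m : ℕ}
    (f : EuclideanSpace ℝ (Fin n) → ℝ)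
    (A : Matrix (Fin m) (Fin n) ℝ) (b : Fin m → ℝ)
    (P : Set (EuclideanSpace ℝ (Fin n)))
    (hP : P = {x | ∀ i, A.mulVec (fun j => x j) i ≤ b i})
    (hne : P.Nonempty)
    (U : Submodule ℝ (EuclideanSpace ℝ (Fin n)))
    (w : EuclideanSpace ℝ (Fin n))
    (hdecomp : ∀ x, f x = f ((U.orthogonalProjectionOnto x : EuclideanSpace ℝ (Fin n))) - ⟪w, x⟫)
    (hbdd : BddBelow (f '' P)) :
    ∃ lam : Fin m → ℝ, (∀ i, 0 ≤ lam i) ∧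
      ∃ u ∈ U, ∀ j, w j = A.transpose.mulVec lam j + u j := by
  set a : Fin m → EuclideanSpace ℝ (Fin n) := fun i => WithLp.toLp 2 (A i)
  have hPa : P = {x | ∀ i, ⟪a i, x⟫ ≤ b i} := by
    simp [hP, a, Matrix.mulVec, dotProduct, PiLp.inner_apply, mul_comm]
  subst hPa
  obtain ⟨l, hl, u, hu, hwu⟩ := exists_nonneg_sum_smul_add_mem_of_forall_inner_nonneg a U
    (w := w) fun y hy hay => by
      simpa using inner_nonpos_of_bddBelow_of_mem_orthogonal hdecomp hne hbdd (d := -y)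
        (neg_mem hy) (by simpa using hay)
  refine ⟨l, hl, u, hu, fun j => ?_⟩
  simp [hwu, a, Matrix.mulVec, dotProduct, mul_comm]

/-- Given the structural decomposition of a convex polynomial `f`
that is bounded from below on the nonempty polyhedron `P = {x : Ax ≤ b}`, the vector
`w` admits a Farkas-type representation `w = Aᵀλ + u` with `λ ≥ 0` and `u ∈ U`. -/
theorem farkas_certificate_of_bounded_below {n m : ℕ}
    (f : EuclideanSpace ℝ (Fin n) → ℝ)
    (hpoly : ∃ p : MvPolynomial (Fin n) ℝ, ∀ x, f x = MvPolynomial.eval (fun i => x i) p)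
    (hconv : ConvexOn ℝ Set.univ f)
    (A : Matrix (Fin m) (Fin n) ℝ) (b : Fin m → ℝ)
    (P : Set (EuclideanSpace ℝ (Fin n)))
    (hP : P = {x | ∀ i, A.mulVec (fun j => x j) i ≤ b i})
    (hne : P.Nonempty)
    (U : Submodule ℝ (EuclideanSpace ℝ (Fin n)))
    (w β : EuclideanSpace ℝ (Fin n)) (α μ : ℝ)
    (hw : w ∈ Uᗮ) (hμ : 0 < μ)
    (hdecomp : ∀ x, f x = f ((U.orthogonalProjectionOnto x : EuclideanSpace ℝ (Fin n))) - ⟪w, x⟫)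
    (hlb : ∀ x, α + ⟪β, (U.orthogonalProjectionOnto x : EuclideanSpace ℝ (Fin n))⟫
        + (μ / 2) * ‖(U.orthogonalProjectionOnto x : EuclideanSpace ℝ (Fin n))‖ ^ 2
        ≤ f ((U.orthogonalProjectionOnto x : EuclideanSpace ℝ (Fin n))))
    (hbdd : BddBelow (f '' P)) :
    ∃ lam : Fin m → ℝ, (∀ i, 0 ≤ lam i) ∧
      ∃ u ∈ U, ∀ j, w j = A.transpose.mulVec lam j + u j :=
  farkas_certificate_of_bounded_below_general f A b P hP hne U w hdecomp hbdd
end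

section
/- The function f : ℝ → ℝ given by f(x) = (x³ + x + 1)² is convex, its global minimum value is 0, this minimum is attained at exactly one point x* ∈ ℝ (the unique real root of x³ + x + 1), and x* is irrational. -/
/-!
The cubic `g x = x³ + x + 1` is strictly increasing and changes sign on `[-1, 0]`, so it has
exactly one real root `x*`, which is then the unique zero, hence the unique minimizer, of
`f = g²`. Convexity of `f` is the second derivative test: `f'' = 30x⁴ + 24x² + 12x + 2 > 0`.
By the integral root theorem a rational root of the monic `X³ + X + 1` would be an integer `n`,
but `n³ + n + 1` is positive for `n ≥ 0` and negative for `n < 0`.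
-/

open Polynomial Set

theorem Polynomial.convexOn_univ_eval {p : ℝ[X]}
    (h : ∀ x, 0 ≤ (derivative (derivative p)).eval x) : ConvexOn ℝ univ fun x => p.eval x := by
  have hderiv (q : ℝ[X]) : deriv (fun x => q.eval x) = fun x => q.derivative.eval x := by
    ext; exact q.deriv
  refine convexOn_univ_of_deriv2_nonneg p.differentiable ?_ fun x => ?_
  · simpa only [hderiv] using p.derivative.differentiable
  · simpa only [Function.iterate_succ, Function.iterate_zero, Function.comp_id, id_eq,
      Function.comp_apply, hderiv] using h x

theorem irrational_of_aeval_eq_zero {p : ℤ[X]} (hp : p.Monic) (hp_int : ∀ n : ℤ, ¬p.IsRoot n)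
    {x : ℝ} (hx : aeval x p = 0) : Irrational x := by
  rintro ⟨q, rfl⟩
  have hq : aeval q p = 0 := by
    rw [← (algebraMap ℚ ℝ).injective.eq_iff, ← aeval_algebraMap_apply]
    simpa using hx
  obtain ⟨n, rfl, -⟩ := exists_integer_of_is_root_of_monic hp hq
  apply hp_int n
  simpa [aeval_def, eval₂_eq_eval_map, IsRoot] using hq

theorem strictMono_cube_add_self_add (c : ℝ) : StrictMono fun x : ℝ => x ^ 3 + x + c :=
  ((Odd.strictMono_pow (by decide)).add strictMono_id).add_const c

theorem exists_cube_add_self_add_one_eq_zero : ∃ x : ℝ, x ^ 3 + x + 1 = 0 := by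
  obtain ⟨x, -, hx⟩ := intermediate_value_Icc (by norm_num : (-1 : ℝ) ≤ 0)
    (f := fun x : ℝ => x ^ 3 + x + 1) (by fun_prop) (show (0 : ℝ) ∈ Icc _ _ by norm_num)
  exact ⟨x, hx⟩

theorem Int.cube_add_self_add_one_ne_zero (n : ℤ) : n ^ 3 + n + 1 ≠ 0 := by
  rcases le_or_gt 0 n with h | h <;> nlinarith [sq_nonneg n]

theorem irrational_of_cube_add_self_add_one_eq_zero {x : ℝ} (hx : x ^ 3 + x + 1 = 0) :
    Irrational x := by
  refine irrational_of_aeval_eq_zero (p := X ^ 3 + X + 1) (by monicity!) (fun n => ?_)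
    (by simpa using hx)
  simpa using n.cube_add_self_add_one_ne_zero

theorem convexOn_sq_cube_add_self_add_one :
    ConvexOn ℝ univ fun x : ℝ => (x ^ 3 + x + 1) ^ 2 := by
  have h := Polynomial.convexOn_univ_eval (p := (X ^ 3 + X + 1) ^ 2) fun x => by
    have hp'' : (derivative (derivative ((X ^ 3 + X + 1) ^ 2 : ℝ[X]))).eval x =
        30 * x ^ 4 + 24 * x ^ 2 + 12 * x + 2 := by
      simp only [derivative_pow, Nat.cast_ofNat, Nat.add_one_sub_one, pow_one, derivative_add,
        derivative_X, mul_one, derivative_one, add_zero, derivative_mul, derivative_C, zero_mul,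
        zero_add, eval_add, eval_mul, eval_C, eval_pow, eval_X, eval_one]
      ring
    rw [hp'']
    nlinarith [sq_nonneg (x ^ 2), sq_nonneg (4 * x + 1)]
  simpa only [eval_pow, eval_add, eval_X, eval_one] using h

/-- `f(x) = (x³ + x + 1)²` is convex, its global minimum value is `0`,
it is attained at exactly one point `x*` (the unique real root of `x³ + x + 1`),
and `x*` is irrational. -/
theorem sextic_irrational_unique_minimizer (f : ℝ → ℝ)
    (hf : ∀ x, f x = (x ^ 3 + x + 1) ^ 2) :
    ConvexOn ℝ Set.univ f ∧
    (∀ x, 0 ≤ f x) ∧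
    ∃ xstar : ℝ,
      f xstar = 0 ∧
      (∀ y, f y = 0 → y = xstar) ∧
      xstar ^ 3 + xstar + 1 = 0 ∧
      (∀ y : ℝ, y ^ 3 + y + 1 = 0 → y = xstar) ∧
      Irrational xstar := by
  obtain rfl : f = fun x => (x ^ 3 + x + 1) ^ 2 := funext hf
  obtain ⟨xstar, hroot⟩ := exists_cube_add_self_add_one_eq_zero
  have hunique (y : ℝ) (hy : y ^ 3 + y + 1 = 0) : y = xstar :=
    (strictMono_cube_add_self_add 1).injective (hy.trans hroot.symm)
  refine ⟨convexOn_sq_cube_add_self_add_one, fun x => sq_nonneg _, xstar, by simp [hroot],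
    fun y hy => hunique y (pow_eq_zero_iff two_ne_zero |>.mp hy), hroot, hunique,
    irrational_of_cube_add_self_add_one_eq_zero hroot⟩
end

section
/- Let f be a univariate polynomial of degree 4 with rational coefficients such that the function x ↦ f(x) is convex on ℝ. Then f attains its global minimum at a unique point x* ∈ ℝ, and if the minimum value f(x*) is rational, then the minimizer x* is rational. -/
/-! A convex quartic has positive leading coefficient, so it tends to `+∞` at both ends and attains
its minimum. The minimizers form a convex set on which `f` is constant, so there is only one.
If the minimum value `m` is rational, the minimizer `x` is a double root of the rational quartic
`f - m`, hence the square of its minimal polynomial `p` divides `f - m` and `deg p ≤ 2`. If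
`deg p = 2`, the conjugate of `x` is a second real root of `f - m`, i.e. a second minimizer;
so `deg p = 1` and `x` is rational. -/

open Polynomial Filter Set

namespace Polynomial

theorem tendsto_atBot_atTop_of_even_natDegree {P : ℝ[X]} (hdeg : 0 < P.degree)
    (heven : Even P.natDegree) (hnng : 0 ≤ P.leadingCoeff) :
    Tendsto (fun x => eval x P) atBot atTop := by
  have h := (P.comp (-X)).tendsto_atTop_of_leadingCoeff_nonneg (by simp [hdeg])
    (by simpa [heven.neg_one_pow] using hnng)
  convert h.comp tendsto_neg_atBot_atTop using 2
  simp

theorem leadingCoeff_pos_of_convexOn {P : ℝ[X]} (hdeg : 0 < P.degree)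
    (heven : Even P.natDegree) (hconv : ConvexOn ℝ univ fun x => eval x P) :
    0 < P.leadingCoeff := by
  by_contra! hlc
  have htop : Tendsto (fun x => eval x P) atTop atBot :=
    tendsto_atBot_of_leadingCoeff_nonpos P hdeg hlc
  have hbot : Tendsto (fun x => eval x P) atBot atBot := by
    refine tendsto_neg_atTop_iff.mp ?_
    simpa using (-P).tendsto_atBot_atTop_of_even_natDegree (by rwa [degree_neg])
      (by rwa [natDegree_neg]) (by simpa using hlc)
  obtain ⟨t, ht, hnt⟩ := ((htop.eventually_lt_atBot (eval 0 P)).and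
    ((hbot.comp tendsto_neg_atTop_atBot).eventually_lt_atBot (eval 0 P))).exists
  have hmid := hconv.2 (mem_univ t) (mem_univ (-t)) (by norm_num : (0 : ℝ) ≤ 1 / 2)
    (by norm_num : (0 : ℝ) ≤ 1 / 2) (by norm_num)
  norm_num at hmid hnt
  linarith

theorem exists_forall_eval_le_of_convexOn {P : ℝ[X]} (hdeg : 0 < P.degree)
    (heven : Even P.natDegree) (hconv : ConvexOn ℝ univ fun x => eval x P) :
    ∃ x, ∀ y, eval x P ≤ eval y P := by
  have hlc := (leadingCoeff_pos_of_convexOn hdeg heven hconv).le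
  refine P.continuous.exists_forall_le ?_
  rw [cocompact_eq_atBot_atTop]
  exact tendsto_sup.2 ⟨tendsto_atBot_atTop_of_even_natDegree hdeg heven hlc,
    tendsto_atTop_of_leadingCoeff_nonneg P hdeg hlc⟩

theorem eq_of_forall_eval_le_of_convexOn {P : ℝ[X]} (hdeg : 0 < P.degree)
    (hconv : ConvexOn ℝ univ fun x => eval x P) {x y : ℝ}
    (hx : ∀ z, eval x P ≤ eval z P) (hy : ∀ z, eval y P ≤ eval z P) : x = y := by
  by_contra hne
  have hconst : uIcc x y ⊆ {z | eval z P = eval z (C (eval x P))} := by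
    intro z hz
    have hsub := (hconv.convex_le (eval x P)).ordConnected.uIcc_subset
      ⟨mem_univ x, le_rfl⟩ ⟨mem_univ y, hy x⟩ hz
    simpa using hsub.2.antisymm (hx z)
  have hP := eq_of_infinite_eval_eq P _ ((Icc_infinite (min_lt_max.2 hne)).mono hconst)
  exact hdeg.not_ge (hP ▸ degree_C_le)

end Polynomial

namespace minpoly

variable {K L : Type*} [Field K] [Field L] [Algebra K L]

theorem sq_dvd_of_aeval_derivative_eq_zero [CharZero K] {x : L} {g : K[X]} (hg : g ≠ 0)
    (h0 : Polynomial.aeval x g = 0) (h1 : Polynomial.aeval x (derivative g) = 0) :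
    minpoly K x ^ 2 ∣ g := by
  have hint : IsIntegral K x := IsAlgebraic.isIntegral ⟨g, hg, h0⟩
  obtain ⟨q, rfl⟩ := dvd K x h0
  have hcop : IsCoprime (minpoly K x) (derivative (minpoly K x)) :=
    (irreducible hint).separable
  have hdvd : minpoly K x ∣ derivative (minpoly K x) * q := by
    have := dvd K x h1
    rwa [derivative_mul, dvd_add_left (dvd_mul_right _ _)] at this
  rw [sq]
  exact mul_dvd_mul_left _ (hcop.dvd_of_dvd_mul_left hdvd)

theorem exists_ne_aeval_eq_zero_of_natDegree_eq_two [CharZero K] {x : L}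
    (h : (minpoly K x).natDegree = 2) : ∃ y ≠ x, Polynomial.aeval y (minpoly K x) = 0 := by
  have hint : IsIntegral K x := by
    by_contra hx
    simp [eq_zero hx] at h
  set b := (minpoly K x).coeff 1
  have heval (z : L) : Polynomial.aeval z (minpoly K x) =
      z ^ 2 + algebraMap K L b * z + algebraMap K L ((minpoly K x).coeff 0) := by
    have hlead : (minpoly K x).coeff 2 = 1 := h ▸ (monic hint).coeff_natDegree
    simp [aeval_eq_sum_range, h, Finset.sum_range_succ, hlead, Algebra.smul_def, b]
    ring
  have hx := (heval x).symm.trans (minpoly.aeval K x)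
  -- the two roots of a monic quadratic add up to minus its linear coefficient
  refine ⟨-algebraMap K L b - x, fun hy => ?_, by rw [heval]; linear_combination hx⟩
  have h2 : (2 : L) ≠ 0 := by
    rw [← map_ofNat (algebraMap K L) 2]
    exact (_root_.map_ne_zero _).mpr two_ne_zero
  have hxK : algebraMap K L (-b / 2) = x := by
    rw [map_div₀, map_neg, map_ofNat]
    field_simp
    linear_combination hy
  have := natDegree_eq_one_iff.mpr ⟨_, hxK⟩
  omega

end minpoly

theorem Polynomial.mem_range_algebraMap_of_unique_double_root {K L : Type*} [Field K]
    [CharZero K] [Field L] [Algebra K L] {g : K[X]} (hg : g ≠ 0) (hdeg : g.natDegree ≤ 5) {x : L}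
    (h0 : aeval x g = 0) (h1 : aeval x (derivative g) = 0)
    (huniq : ∀ y, aeval y g = 0 → y = x) : x ∈ (algebraMap K L).range := by
  have hint : IsIntegral K x := IsAlgebraic.isIntegral ⟨g, hg, h0⟩
  have hsq := natDegree_le_of_dvd (minpoly.sq_dvd_of_aeval_derivative_eq_zero hg h0 h1) hg
  have hpos := minpoly.natDegree_pos hint
  have hle : (minpoly K x).natDegree ≤ 2 := by rw [natDegree_pow] at hsq; omega
  interval_cases hp : (minpoly K x).natDegree
  · exact minpoly.natDegree_eq_one_iff.mp hp
  · obtain ⟨y, hne, hy⟩ := minpoly.exists_ne_aeval_eq_zero_of_natDegree_eq_two hp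
    exact absurd (huniq y (aeval_eq_zero_of_dvd_aeval_eq_zero (minpoly.dvd K x h0) hy)) hne

/-- A convex univariate degree-4 polynomial with rational coefficients
attains its global minimum at a unique point `x*`; if the minimum value is rational
then the minimizer `x*` is rational. -/
theorem convex_quartic_rational_min_implies_rational_minimizer
    (f : Polynomial ℚ) (hdeg : f.degree = 4)
    (hconv : ConvexOn ℝ Set.univ fun x : ℝ => Polynomial.aeval x f) :
    ∃ xstar : ℝ,
      (∀ x : ℝ, Polynomial.aeval xstar f ≤ Polynomial.aeval x f) ∧
      (∀ y : ℝ, (∀ x : ℝ, Polynomial.aeval y f ≤ Polynomial.aeval x f) → y = xstar) ∧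
      ((∃ q : ℚ, (Polynomial.aeval xstar f : ℝ) = (q : ℝ)) → ∃ q : ℚ, xstar = (q : ℝ)) := by
  set F := f.map (algebraMap ℚ ℝ)
  have hF (x : ℝ) : aeval x f = eval x F := (eval_map_algebraMap f x).symm
  simp only [hF] at hconv ⊢
  have hFdeg : F.degree = 4 := by simpa [F] using hdeg
  have hFpos : 0 < F.degree := by rw [hFdeg]; decide
  have heven : Even F.natDegree := by rw [natDegree_eq_of_degree_eq_some hFdeg]; decide
  obtain ⟨x, hx⟩ := F.exists_forall_eval_le_of_convexOn hFpos heven hconv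
  have huniq (y : ℝ) (hy : ∀ z, eval y F ≤ eval z F) : y = x :=
    F.eq_of_forall_eval_le_of_convexOn hFpos hconv hy hx
  refine ⟨x, hx, huniq, fun ⟨m, hm⟩ => ?_⟩
  have hcrit : eval x (derivative F) = 0 := by
    rw [← Polynomial.deriv]
    exact IsLocalMin.deriv_eq_zero (Eventually.of_forall hx)
  have hroot (y : ℝ) : aeval y (f - C m) = eval y F - m := by simp [hF]
  have hgdeg : (f - C m).natDegree = 4 := by
    rw [natDegree_sub_C, natDegree_eq_of_degree_eq_some hdeg]
  obtain ⟨q, hq⟩ := mem_range_algebraMap_of_unique_double_root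
    (ne_zero_of_natDegree_gt (hgdeg ▸ four_pos)) (by omega)
    (by rw [hroot, hm, sub_self])
    (by simpa [F, derivative_map, eval_map_algebraMap] using hcrit)
    (fun y hy => huniq y fun z => by rw [hroot, sub_eq_zero, ← hm] at hy; rw [hy]; exact hx z)
  exact ⟨q, hq.symm⟩
end
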